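/- arXiv:1612.04220 — 6 statements merged into one kernel-verified Lean document; each statement's English description precedes it below -/
import Mathlib

section
/- A Borel measurable function α : [1,∞) → (0,∞) is RO-varying at infinity (i.e., there exist b > 1 and c ≥ 1 such that c⁻¹ ≤ α(λt)/α(t) ≤ c for all t ≥ 1 and λ ∈ [1,b]) if and only if α admits a representation α(t) = exp(β(t) + ∫₁ᵗ γ(τ)/τ dτ) for t ≥ 1, where β and γ are real-valued, Borel measurable, bounded functions on [1,∞). -/
/-!
Write `h = log α`; the RO condition says `|h (l t) - h t| ≤ C` for `t ≥ 1`, `l ∈ [1, b]`.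
Given it, average `h` over `[t, b t]` against the dilation-invariant measure `dσ / σ`:
`φ t = (log b)⁻¹ ∫_t^{bt} h(σ) dσ / σ`. Then `|h - φ| ≤ C`, and invariance of `dσ / σ` under
`σ ↦ b σ` gives `φ t - φ 1 = ∫_1^t γ(τ) dτ / τ` with `γ τ = (h (b τ) - h τ) / log b`, which is
bounded by `C / log b`; so `β = h - φ + φ 1` works. Conversely, for a representation with bounds
`M`, `h (l t) - h t` is a difference of two values of `β` plus `∫_t^{lt} γ(τ) dτ / τ`, which is at
most `(l - 1) M` in absolute value.
-/

open MeasureTheory Set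

theorem intervalIntegrable_of_abs_le {g : ℝ → ℝ} {a b B : ℝ} (hg : Measurable g)
    (hB : ∀ x ∈ uIoc a b, |g x| ≤ B) : IntervalIntegrable g volume a b :=
  intervalIntegrable_iff.2 <| IntegrableOn.of_bound measure_Ioc_lt_top hg.aestronglyMeasurable B
    (ae_restrict_of_forall_mem measurableSet_uIoc hB)

theorem inv_le_and_le_iff_abs_log_le {r c : ℝ} (hr : 0 < r) (hc : 0 < c) :
    c⁻¹ ≤ r ∧ r ≤ c ↔ |Real.log r| ≤ Real.log c := by
  rw [abs_le, ← Real.log_inv, Real.log_le_log_iff (inv_pos.2 hc) hr,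
    Real.log_le_log_iff hr hc]

theorem intervalIntegral.integral_comp_mul_left_div (k : ℝ → ℝ) {c : ℝ} (hc : c ≠ 0) (a b : ℝ) :
    ∫ x in a..b, k (c * x) / x = ∫ x in c * a..c * b, k x / x := by
  have hk : ∀ x, k (c * x) / x = c * (k (c * x) / (c * x)) := fun x => by
    rw [← mul_div_assoc, mul_div_mul_left _ _ hc]
  simp_rw [hk, intervalIntegral.integral_const_mul, intervalIntegral.integral_comp_mul_left
    (fun x => k x / x) hc, smul_eq_mul, mul_inv_cancel_left₀ hc]

theorem integral_const_div_mul_left_eq_mul_log (c : ℝ) {b t : ℝ} (hb : 0 < b) (ht : 0 < t) :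
    ∫ σ in t..b * t, c / σ = c * Real.log b := by
  simp_rw [div_eq_mul_inv, intervalIntegral.integral_const_mul,
    integral_inv_of_pos ht (mul_pos hb ht), mul_div_cancel_right₀ _ ht.ne']

section Oscillation

variable {h : ℝ → ℝ} {b C : ℝ}

theorem abs_sub_le_of_mem_Icc_mul
    (hosc : ∀ t ≥ (1:ℝ), ∀ l ∈ Icc 1 b, |h (l * t) - h t| ≤ C) {t σ : ℝ} (ht : 1 ≤ t)
    (hσ : σ ∈ Icc t (b * t)) : |h σ - h t| ≤ C := by
  have ht0 : 0 < t := by linarith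
  simpa [div_mul_cancel₀ σ ht0.ne'] using
    hosc t ht (σ / t) ⟨(one_le_div ht0).2 hσ.1, (div_le_iff₀ ht0).2 hσ.2⟩

theorem abs_sub_le_of_mem_Icc_pow (hb : 1 < b)
    (hosc : ∀ t ≥ (1:ℝ), ∀ l ∈ Icc 1 b, |h (l * t) - h t| ≤ C) (n : ℕ) {s : ℝ}
    (hs : s ∈ Icc 1 (b ^ n)) : |h s - h 1| ≤ n * C := by
  induction n generalizing s with
  | zero =>
    obtain rfl : s = 1 := le_antisymm (by simpa using hs.2) hs.1
    simp
  | succ n ih =>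
    set t := max (s / b) 1
    have ht : t ∈ Icc 1 (b ^ n) :=
      ⟨le_max_right _ _, max_le ((div_le_iff₀ (by linarith)).2 (by rw [← pow_succ]; exact hs.2))
        (one_le_pow₀ hb.le)⟩
    have hst : s ∈ Icc t (b * t) :=
      ⟨max_le (div_le_self (by linarith [hs.1]) hb.le) hs.1,
        (div_le_iff₀' (by linarith)).1 (le_max_left _ _)⟩
    calc |h s - h 1| ≤ |h s - h t| + |h t - h 1| := abs_sub_le _ _ _
      _ ≤ C + n * C := add_le_add (abs_sub_le_of_mem_Icc_mul hosc ht.1 hst) (ih ht)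
      _ = (n + 1 : ℕ) * C := by push_cast; ring

theorem intervalIntegrable_div_id_of_abs_sub_le (hb : 1 < b) (hmeas : Measurable h)
    (hosc : ∀ t ≥ (1:ℝ), ∀ l ∈ Icc 1 b, |h (l * t) - h t| ≤ C) {p q : ℝ} (hp : 1 ≤ p)
    (hq : 1 ≤ q) : IntervalIntegrable (fun σ => h σ / σ) volume p q := by
  obtain ⟨n, hn⟩ := pow_unbounded_of_one_lt (max p q) hb
  refine intervalIntegrable_of_abs_le (hmeas.div measurable_id) (B := |h 1| + n * C)
    fun σ hσ => ?_
  have hσ1 : 1 ≤ σ := (le_min hp hq).trans hσ.1.le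
  have hσn := abs_sub_le_of_mem_Icc_pow hb hosc n ⟨hσ1, hσ.2.trans hn.le⟩
  calc |h σ / σ| = |h σ| / σ := by rw [abs_div, abs_of_pos (a := σ) (by linarith)]
    _ ≤ |h σ| := div_le_self (abs_nonneg _) hσ1
    _ ≤ |h 1| + n * C := by linarith [abs_sub_abs_le_abs_sub (h σ) (h 1)]

noncomputable def logAverage (h : ℝ → ℝ) (b t : ℝ) : ℝ :=
  (∫ σ in t..b * t, h σ / σ) / Real.log b

theorem abs_sub_logAverage_le (hb : 1 < b) (hmeas : Measurable h)
    (hosc : ∀ t ≥ (1:ℝ), ∀ l ∈ Icc 1 b, |h (l * t) - h t| ≤ C) {t : ℝ} (ht : 1 ≤ t) :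
    |h t - logAverage h b t| ≤ C := by
  have hL : 0 < Real.log b := Real.log_pos hb
  have ht0 : 0 < t := by linarith
  have htbt : t ≤ b * t := le_mul_of_one_le_left ht0.le hb.le
  have hinv (c : ℝ) : IntervalIntegrable (fun σ => c / σ) volume t (b * t) := by
    apply ContinuousOn.intervalIntegrable
    exact continuousOn_const.div continuousOn_id fun σ hσ =>
      (ht0.trans_le (uIcc_of_le htbt ▸ hσ).1).ne'
  have hdiff : h t - logAverage h b t = (∫ σ in t..b * t, (h t - h σ) / σ) / Real.log b := by
    simp_rw [sub_div]
    rw [intervalIntegral.integral_sub (hinv (h t))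
      (intervalIntegrable_div_id_of_abs_sub_le hb hmeas hosc ht (by linarith)),
      integral_const_div_mul_left_eq_mul_log _ (by linarith) ht0, logAverage]
    field_simp
  have hbound : ‖∫ σ in t..b * t, (h t - h σ) / σ‖ ≤ ∫ σ in t..b * t, C / σ := by
    refine intervalIntegral.norm_integral_le_of_norm_le htbt (ae_of_all _ fun σ hσ => ?_)
      (hinv C)
    have hσ0 : 0 < σ := ht0.trans hσ.1
    rw [Real.norm_eq_abs, abs_div, abs_of_pos hσ0, abs_sub_comm]
    exact div_le_div_of_nonneg_right
      (abs_sub_le_of_mem_Icc_mul hosc ht ⟨hσ.1.le, hσ.2⟩) hσ0.le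
  rw [hdiff, abs_div, abs_of_pos hL, div_le_iff₀ hL, ← Real.norm_eq_abs]
  exact hbound.trans_eq (integral_const_div_mul_left_eq_mul_log _ (by linarith) ht0)

theorem logAverage_eq_add_integral (hb : 1 < b) (hmeas : Measurable h)
    (hosc : ∀ t ≥ (1:ℝ), ∀ l ∈ Icc 1 b, |h (l * t) - h t| ≤ C) {t : ℝ} (ht : 1 ≤ t) :
    logAverage h b t
      = logAverage h b 1 + ∫ τ in 1..t, (h (b * τ) - h τ) / Real.log b / τ := by
  have hk {p q : ℝ} (hp : 1 ≤ p) (hq : 1 ≤ q) :=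
    intervalIntegrable_div_id_of_abs_sub_le hb hmeas hosc hp hq
  -- `τ ↦ h (b * τ)` oscillates as little as `h` does
  have hkb : IntervalIntegrable (fun τ => h (b * τ) / τ) volume 1 t :=
    intervalIntegrable_div_id_of_abs_sub_le (h := fun τ => h (b * τ)) hb
      (hmeas.comp (measurable_const_mul b))
      (fun s hs l hl => by simpa [mul_left_comm] using hosc (b * s) (by nlinarith) l hl)
      le_rfl ht
  have hbt : 1 ≤ b * t := by nlinarith
  have hchasles : (∫ σ in 1..b, h σ / σ) + ∫ σ in b..b * t, h σ / σ
      = (∫ σ in 1..t, h σ / σ) + ∫ σ in t..b * t, h σ / σ := by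
    rw [intervalIntegral.integral_add_adjacent_intervals (hk le_rfl hb.le) (hk hb.le hbt),
      intervalIntegral.integral_add_adjacent_intervals (hk le_rfl ht) (hk ht hbt)]
  have hsubst := intervalIntegral.integral_comp_mul_left_div h (by linarith : b ≠ 0) 1 t
  have hsplit : ∫ τ in 1..t, (h (b * τ) - h τ) / Real.log b / τ
      = ((∫ τ in 1..t, h (b * τ) / τ) - ∫ τ in 1..t, h τ / τ) / Real.log b := by
    rw [← intervalIntegral.integral_sub hkb (hk le_rfl ht), ← intervalIntegral.integral_div]
    congr 1 with τ
    ring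
  rw [hsplit, hsubst, logAverage, logAverage, mul_one, ← add_div]
  congr 1
  linarith

theorem exists_representation_of_abs_sub_le (hb : 1 < b) (hmeas : Measurable h)
    (hosc : ∀ t ≥ (1:ℝ), ∀ l ∈ Icc 1 b, |h (l * t) - h t| ≤ C) :
    ∃ β γ : ℝ → ℝ, Measurable β ∧ Measurable γ ∧
      (∃ M : ℝ, ∀ t ≥ (1:ℝ), |β t| ≤ M ∧ |γ t| ≤ M) ∧
      ∀ t ≥ (1:ℝ), h t = β t + ∫ τ in Ioc 1 t, γ τ / τ := by
  have hL : 0 < Real.log b := Real.log_pos hb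
  have hC : 0 ≤ C := by simpa using hosc 1 le_rfl 1 ⟨le_rfl, hb.le⟩
  -- cut off below `1` so that `γ τ / τ` is bounded on all of `ℝ`
  set γ : ℝ → ℝ := fun τ => if 1 ≤ τ then (h (b * τ) - h τ) / Real.log b else 0
  have hγ : Measurable γ := Measurable.ite measurableSet_Ici
    (((hmeas.comp (measurable_const_mul b)).sub hmeas).div_const _) measurable_const
  have hγ_le {τ : ℝ} (hτ : 1 ≤ τ) : |γ τ| ≤ C / Real.log b := by
    simp only [γ, if_pos hτ, abs_div, abs_of_pos hL]
    gcongr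
    exact abs_sub_le_of_mem_Icc_mul hosc hτ ⟨by nlinarith, le_rfl⟩
  have hγ_div_le (τ : ℝ) : |γ τ / τ| ≤ C / Real.log b := by
    by_cases hτ : 1 ≤ τ
    · rw [abs_div, abs_of_pos (a := τ) (by linarith)]
      exact (div_le_self (abs_nonneg _) hτ).trans (hγ_le hτ)
    · simp only [γ, if_neg hτ, zero_div, abs_zero]
      positivity
  set β : ℝ → ℝ := fun t => h t - ∫ τ in 1..t, γ τ / τ
  have hβ : Measurable β := hmeas.sub (intervalIntegral.continuous_primitive
    (fun _ _ => intervalIntegrable_of_abs_le (hγ.div measurable_id) fun τ _ => hγ_div_le τ)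
    1).measurable
  have hβ_eq {t : ℝ} (ht : 1 ≤ t) : β t = h t - logAverage h b t + logAverage h b 1 := by
    have hγ_eq : ∫ τ in 1..t, γ τ / τ = ∫ τ in 1..t, (h (b * τ) - h τ) / Real.log b / τ :=
      intervalIntegral.integral_congr fun τ hτ => by
        simp only [γ, if_pos (uIcc_of_le ht ▸ hτ).1]
    simp only [β, hγ_eq, logAverage_eq_add_integral hb hmeas hosc ht]
    ring
  refine ⟨β, γ, hβ, hγ, ⟨C + |logAverage h b 1| + C / Real.log b, fun t ht => ⟨?_, ?_⟩⟩,
    fun t ht => ?_⟩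
  · rw [hβ_eq ht]
    have := abs_add_le (h t - logAverage h b t) (logAverage h b 1)
    linarith [abs_sub_logAverage_le hb hmeas hosc ht, div_nonneg hC hL.le]
  · linarith [hγ_le ht, abs_nonneg (logAverage h b 1)]
  · simp only [β, intervalIntegral.integral_of_le ht]
    ring

end Oscillation

theorem abs_sub_le_of_representation {h β γ : ℝ → ℝ} {M : ℝ} (hγ : Measurable γ)
    (hbd : ∀ t ≥ (1:ℝ), |β t| ≤ M ∧ |γ t| ≤ M)
    (hrep : ∀ t ≥ (1:ℝ), h t = β t + ∫ τ in Ioc 1 t, γ τ / τ) {t l : ℝ} (ht : 1 ≤ t)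
    (hl : 1 ≤ l) : |h (l * t) - h t| ≤ (l + 1) * M := by
  have ht0 : 0 < t := by linarith
  have htlt : t ≤ l * t := le_mul_of_one_le_left ht0.le hl
  have hγ_div_le {p τ : ℝ} (hp : 1 ≤ p) (hτ : p < τ) : ‖γ τ / τ‖ ≤ M / p := by
    rw [Real.norm_eq_abs, abs_div, abs_of_pos (a := τ) (by linarith)]
    exact div_le_div₀ ((abs_nonneg _).trans (hbd 1 le_rfl).2) (hbd τ (by linarith)).2
      (by linarith) hτ.le
  have hint {p : ℝ} (hp : 1 ≤ p) (q : ℝ) : IntegrableOn (fun τ => γ τ / τ) (Ioc p q) :=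
    IntegrableOn.of_bound measure_Ioc_lt_top (hγ.div measurable_id).aestronglyMeasurable (M / p)
      (ae_restrict_of_forall_mem measurableSet_Ioc fun τ hτ => hγ_div_le hp hτ.1)
  have hsplit : ∫ τ in Ioc 1 (l * t), γ τ / τ
      = (∫ τ in Ioc 1 t, γ τ / τ) + ∫ τ in Ioc t (l * t), γ τ / τ := by
    rw [← Ioc_union_Ioc_eq_Ioc ht htlt, setIntegral_union (Ioc_disjoint_Ioc_of_le le_rfl)
      measurableSet_Ioc (hint le_rfl t) (hint ht (l * t))]
  have htail : |∫ τ in Ioc t (l * t), γ τ / τ| ≤ (l - 1) * M := by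
    have : ‖∫ τ in Ioc t (l * t), γ τ / τ‖ ≤ M / t * volume.real (Ioc t (l * t)) :=
      norm_setIntegral_le_of_norm_le_const measure_Ioc_lt_top fun τ hτ => hγ_div_le ht hτ.1
    rw [Real.norm_eq_abs, Real.volume_real_Ioc_of_le htlt] at this
    convert this using 1
    field_simp
  have hβ₁ := (hbd (l * t) (by nlinarith)).1
  have hβ₂ := (hbd t ht).1
  rw [hrep (l * t) (by nlinarith), hrep t ht, hsplit]
  rw [abs_le] at hβ₁ hβ₂ htail ⊢
  constructor <;> linarith

/-- A Borel measurable function `α : [1,∞) → (0,∞)` is RO-varying at infinity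
iff it admits the representation `α(t) = exp(β(t) + ∫₁ᵗ γ(τ)/τ dτ)` with `β, γ`
Borel measurable and bounded on `[1,∞)`. -/
theorem ro_iff_representation (α : ℝ → ℝ) (hmeas : Measurable α)
    (hpos : ∀ t ≥ (1:ℝ), 0 < α t) :
    (∃ b > (1:ℝ), ∃ c ≥ (1:ℝ), ∀ t ≥ (1:ℝ), ∀ l ∈ Set.Icc (1:ℝ) b,
        c⁻¹ ≤ α (l * t) / α t ∧ α (l * t) / α t ≤ c) ↔
    (∃ β γ : ℝ → ℝ, Measurable β ∧ Measurable γ ∧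
        (∃ M : ℝ, ∀ t ≥ (1:ℝ), |β t| ≤ M ∧ |γ t| ≤ M) ∧
        ∀ t ≥ (1:ℝ), α t = Real.exp (β t + ∫ τ in Set.Ioc (1:ℝ) t, γ τ / τ)) := by
  have hratio {t l c : ℝ} (ht : 1 ≤ t) (hl : 1 ≤ l) (hc : 0 < c) :
      (c⁻¹ ≤ α (l * t) / α t ∧ α (l * t) / α t ≤ c)
        ↔ |Real.log (α (l * t)) - Real.log (α t)| ≤ Real.log c := by
    rw [← Real.log_div (hpos _ (by nlinarith)).ne' (hpos t ht).ne']
    exact inv_le_and_le_iff_abs_log_le (div_pos (hpos _ (by nlinarith)) (hpos t ht)) hc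
  have hexp {t x : ℝ} (ht : 1 ≤ t) : α t = Real.exp x ↔ Real.log (α t) = x :=
    ⟨fun h => by rw [h, Real.log_exp], fun h => by rw [← h, Real.exp_log (hpos t ht)]⟩
  constructor
  · rintro ⟨b, hb, c, hc, hro⟩
    obtain ⟨β, γ, hβ, hγ, hbd, hrep⟩ := exists_representation_of_abs_sub_le hb
      (Real.measurable_log.comp hmeas)
      fun t ht l hl => (hratio ht hl.1 (by linarith)).1 (hro t ht l hl)
    exact ⟨β, γ, hβ, hγ, hbd, fun t ht => (hexp ht).2 (hrep t ht)⟩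
  · rintro ⟨β, γ, -, hγ, ⟨M, hbd⟩, hrep⟩
    have hM : 0 ≤ M := (abs_nonneg _).trans (hbd 1 le_rfl).1
    refine ⟨2, one_lt_two, Real.exp (3 * M), Real.one_le_exp (by positivity),
      fun t ht l hl => (hratio ht hl.1 (Real.exp_pos _)).2 ?_⟩
    rw [Real.log_exp]
    refine (abs_sub_le_of_representation hγ hbd (fun t ht => (hexp ht).1 (hrep t ht)) ht
      hl.1).trans ?_
    nlinarith [hl.2]
end

section
/- Let α ∈ RO. For every w in the Hörmander space H^α(ℝⁿ), w belongs to H^{(s₀)}(ℝⁿ) for every s₀ < σ₀(α), and every w ∈ H^{(s₁)}(ℝⁿ) with s₁ > σ₁(α) belongs to H^α(ℝⁿ); moreover both embeddings H^{(s₁)}(ℝⁿ) ↪ H^α(ℝⁿ) ↪ H^{(s₀)}(ℝⁿ) are continuous. -/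
open MeasureTheory

/-- The class RO of RO-varying functions at infinity. -/
def RO (α : ℝ → ℝ) : Prop :=
  Measurable α ∧ (∀ t ≥ (1:ℝ), 0 < α t) ∧
    ∃ b > (1:ℝ), ∃ c ≥ (1:ℝ), ∀ t ≥ (1:ℝ), ∀ l ∈ Set.Icc (1:ℝ) b,
      c⁻¹ ≤ α (l * t) / α t ∧ α (l * t) / α t ≤ c

/-- Lower Matuszewska index. -/
noncomputable def sigma0 (α : ℝ → ℝ) : ℝ :=
  sSup {s : ℝ | ∃ c > (0:ℝ), ∀ t ≥ (1:ℝ), ∀ l ≥ (1:ℝ), c * l ^ s ≤ α (l * t) / α t}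

/-- Upper Matuszewska index. -/
noncomputable def sigma1 (α : ℝ → ℝ) : ℝ :=
  sInf {s : ℝ | ∃ c > (0:ℝ), ∀ t ≥ (1:ℝ), ∀ l ≥ (1:ℝ), α (l * t) / α t ≤ c * l ^ s}

/-- The Hörmander weight `ξ ↦ α(⟨ξ⟩)` with `⟨ξ⟩ = (1+|ξ|²)^{1/2}`. -/
noncomputable def wt (α : ℝ → ℝ) {n : ℕ} (ξ : EuclideanSpace ℝ (Fin n)) : ℝ :=
  α (Real.sqrt (1 + ‖ξ‖ ^ 2))

/-! A growth bound `f (l * t) ≤ c * f t` on the window `l ∈ [1, b]` iterates to a power bound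
`f (l * t) ≤ c * l ^ logb b c * f t` for all `l ≥ 1`. Applied to `α` and `α⁻¹`, the RO condition
makes both Matuszewska index sets nonempty, so any `s₀ < σ₀(α)` and `s₁ > σ₁(α)` are admissible
exponents. Evaluating the resulting bounds at `t = 1`, `l = ⟨ξ⟩` compares the weight `α(⟨ξ⟩)²` with
`⟨ξ⟩^{2s}` pointwise, and the embeddings follow by integrating against `|W|²`. -/

open Set Real

section Growth

variable {f : ℝ → ℝ} {b c : ℝ}

lemma le_pow_mul_of_le_mul_on_Icc (hb : 1 ≤ b) (hc : 0 ≤ c)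
    (h : ∀ t ≥ (1:ℝ), ∀ l ∈ Icc 1 b, f (l * t) ≤ c * f t) (k : ℕ) :
    ∀ t ≥ (1:ℝ), ∀ l ∈ Icc 1 (b ^ k), f (l * t) ≤ c ^ k * f t := by
  induction k with
  | zero =>
    rintro t - l ⟨hl1, hl⟩
    rw [le_antisymm (by simpa using hl) hl1, one_mul, pow_zero, one_mul]
  | succ k ih =>
    rintro t ht l ⟨hl1, hl⟩
    have hb0 : 0 < b := one_pos.trans_le hb
    -- split `l = (l / m) * m` with `m ∈ [1, b ^ k]` and `l / m ∈ [1, b]`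
    set m := max 1 (l / b)
    have hm1 : 1 ≤ m := le_max_left _ _
    have hm0 : 0 < m := one_pos.trans_le hm1
    have hmk : m ≤ b ^ k := max_le (one_le_pow₀ hb) (by rwa [div_le_iff₀ hb0, ← pow_succ])
    have hlm : l / m ∈ Icc 1 b := by
      rw [mem_Icc, one_le_div hm0, div_le_iff₀ hm0]
      refine ⟨max_le hl1 (div_le_self (one_pos.trans_le hl1).le hb), ?_⟩
      calc l = b * (l / b) := by field_simp
        _ ≤ b * m := mul_le_mul_of_nonneg_left (le_max_right _ _) hb0.le
    calc f (l * t) = f (l / m * (m * t)) := by rw [← mul_assoc, div_mul_cancel₀ l hm0.ne']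
      _ ≤ c * f (m * t) := h _ (one_le_mul_of_one_le_of_one_le hm1 ht) _ hlm
      _ ≤ c * (c ^ k * f t) := mul_le_mul_of_nonneg_left (ih t ht m ⟨hm1, hmk⟩) hc
      _ = c ^ (k + 1) * f t := by ring

lemma rpow_logb_comm {b c l : ℝ} (hc : 0 < c) (hl : 0 < l) :
    c ^ logb b l = l ^ logb b c := by
  rw [rpow_def_of_pos hc, rpow_def_of_pos hl, logb, logb, mul_div, mul_div, mul_comm]

lemma le_mul_rpow_logb_mul_of_le_mul_on_Icc (hf : ∀ t ≥ (1:ℝ), 0 ≤ f t) (hb : 1 < b)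
    (hc : 1 ≤ c) (h : ∀ t ≥ (1:ℝ), ∀ l ∈ Icc 1 b, f (l * t) ≤ c * f t) :
    ∀ t ≥ (1:ℝ), ∀ l ≥ (1:ℝ), f (l * t) ≤ c * l ^ logb b c * f t := by
  intro t ht l hl
  have hl0 : 0 < l := one_pos.trans_le hl
  have hc0 : 0 < c := one_pos.trans_le hc
  set k := ⌈logb b l⌉₊
  have hlk : l ≤ b ^ k := by
    rw [← rpow_natCast, ← logb_le_iff_le_rpow hb hl0]
    exact Nat.le_ceil _
  have hck : c ^ k ≤ c * l ^ logb b c := by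
    calc c ^ k = c ^ (k : ℝ) := (rpow_natCast c k).symm
      _ ≤ c ^ (logb b l + 1) :=
        rpow_le_rpow_of_exponent_le hc (Nat.ceil_lt_add_one (logb_nonneg hb hl)).le
      _ = c * l ^ logb b c := by rw [rpow_add hc0, rpow_one, rpow_logb_comm hc0 hl0, mul_comm]
  calc f (l * t) ≤ c ^ k * f t := le_pow_mul_of_le_mul_on_Icc hb.le hc0.le h k t ht l ⟨hl, hlk⟩
    _ ≤ c * l ^ logb b c * f t := mul_le_mul_of_nonneg_right hck (hf t ht)

end Growth

def UpperIndexBound (α : ℝ → ℝ) (s : ℝ) : Prop :=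
  ∃ c > (0:ℝ), ∀ t ≥ (1:ℝ), ∀ l ≥ (1:ℝ), α (l * t) / α t ≤ c * l ^ s

def LowerIndexBound (α : ℝ → ℝ) (s : ℝ) : Prop :=
  ∃ c > (0:ℝ), ∀ t ≥ (1:ℝ), ∀ l ≥ (1:ℝ), c * l ^ s ≤ α (l * t) / α t

section Index

variable {α : ℝ → ℝ} {s s' : ℝ}

lemma UpperIndexBound.mono (h : UpperIndexBound α s) (hs : s ≤ s') : UpperIndexBound α s' := by
  obtain ⟨c, hc, hbound⟩ := h
  refine ⟨c, hc, fun t ht l hl => (hbound t ht l hl).trans ?_⟩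
  exact mul_le_mul_of_nonneg_left (rpow_le_rpow_of_exponent_le hl hs) hc.le

lemma LowerIndexBound.mono (h : LowerIndexBound α s) (hs : s' ≤ s) : LowerIndexBound α s' := by
  obtain ⟨c, hc, hbound⟩ := h
  refine ⟨c, hc, fun t ht l hl => le_trans ?_ (hbound t ht l hl)⟩
  exact mul_le_mul_of_nonneg_left (rpow_le_rpow_of_exponent_le hl hs) hc.le

lemma RO.exists_upperIndexBound (hα : RO α) : ∃ s, UpperIndexBound α s := by
  obtain ⟨-, hpos, b, hb, c, hc, hwindow⟩ := hα
  refine ⟨logb b c, c, one_pos.trans_le hc, fun t ht l hl => ?_⟩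
  rw [div_le_iff₀ (hpos t ht)]
  refine le_mul_rpow_logb_mul_of_le_mul_on_Icc (fun t ht => (hpos t ht).le) hb hc
    (fun t ht l hl => ?_) t ht l hl
  rw [← div_le_iff₀ (hpos t ht)]
  exact (hwindow t ht l hl).2

lemma RO.exists_lowerIndexBound (hα : RO α) : ∃ s, LowerIndexBound α s := by
  obtain ⟨-, hpos, b, hb, c, hc, hwindow⟩ := hα
  have hc0 : 0 < c := one_pos.trans_le hc
  have hinv : ∀ t ≥ (1:ℝ), ∀ l ≥ (1:ℝ), (α (l * t))⁻¹ ≤ c * l ^ logb b c * (α t)⁻¹ := by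
    refine le_mul_rpow_logb_mul_of_le_mul_on_Icc (fun t ht => (inv_pos.2 (hpos t ht)).le) hb hc
      (fun t ht l hl => ?_)
    have hratio : α t / α (l * t) ≤ c := by
      simpa only [inv_div, inv_inv] using inv_anti₀ (inv_pos.2 hc0) (hwindow t ht l hl).1
    rwa [div_eq_mul_inv, mul_comm, ← le_div_iff₀ (hpos t ht), div_eq_mul_inv] at hratio
  refine ⟨-logb b c, c⁻¹, inv_pos.2 hc0, fun t ht l hl => ?_⟩
  have hl0 : 0 < l := one_pos.trans_le hl
  have hlt := hpos _ (one_le_mul_of_one_le_of_one_le hl ht)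
  have hratio : α t / α (l * t) ≤ c * l ^ logb b c := by
    rw [div_eq_mul_inv, mul_comm, ← le_div_iff₀ (hpos t ht), div_eq_mul_inv]
    exact hinv t ht l hl
  calc c⁻¹ * l ^ (-logb b c) = (c * l ^ logb b c)⁻¹ := by rw [rpow_neg hl0.le, mul_inv]
    _ ≤ (α t / α (l * t))⁻¹ := inv_anti₀ (div_pos (hpos t ht) hlt) hratio
    _ = α (l * t) / α t := inv_div _ _

lemma RO.upperIndexBound_of_sigma1_lt (hα : RO α) (hs : sigma1 α < s) : UpperIndexBound α s :=
  let ⟨_, hbound, hlt⟩ := exists_lt_of_csInf_lt hα.exists_upperIndexBound hs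
  UpperIndexBound.mono hbound hlt.le

lemma RO.lowerIndexBound_of_lt_sigma0 (hα : RO α) (hs : s < sigma0 α) : LowerIndexBound α s :=
  let ⟨_, hbound, hlt⟩ := exists_lt_of_lt_csSup hα.exists_lowerIndexBound hs
  LowerIndexBound.mono hbound hlt.le

end Index

lemma one_le_sqrt_one_add_sq (x : ℝ) : 1 ≤ √(1 + x ^ 2) :=
  one_le_sqrt.2 (le_add_of_nonneg_right (sq_nonneg x))

lemma sqrt_one_add_sq_rpow_sq (x s : ℝ) : (√(1 + x ^ 2) ^ s) ^ 2 = (1 + x ^ 2) ^ s := by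
  rw [rpow_pow_comm (sqrt_nonneg _), sq_sqrt (by positivity)]

section Weight

variable {α : ℝ → ℝ} {s : ℝ}

lemma UpperIndexBound.exists_wt_sq_le (h : UpperIndexBound α s) (hpos : ∀ t ≥ (1:ℝ), 0 < α t)
    (n : ℕ) : ∃ C > (0:ℝ), ∀ ξ : EuclideanSpace ℝ (Fin n), wt α ξ ^ 2 ≤ C * (1 + ‖ξ‖ ^ 2) ^ s := by
  obtain ⟨c, hc, hbound⟩ := h
  have hα1 := hpos 1 le_rfl
  refine ⟨(c * α 1) ^ 2, by positivity, fun ξ => ?_⟩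
  set l := √(1 + ‖ξ‖ ^ 2)
  have hl := one_le_sqrt_one_add_sq ‖ξ‖
  have hαl : α l ≤ c * α 1 * l ^ s := by
    have := hbound 1 le_rfl l hl
    rwa [mul_one, div_le_iff₀ hα1, mul_right_comm] at this
  calc wt α ξ ^ 2 = α l ^ 2 := rfl
    _ ≤ (c * α 1 * l ^ s) ^ 2 := pow_le_pow_left₀ (hpos l hl).le hαl 2
    _ = (c * α 1) ^ 2 * (1 + ‖ξ‖ ^ 2) ^ s := by rw [mul_pow, sqrt_one_add_sq_rpow_sq]

lemma LowerIndexBound.exists_rpow_le_wt_sq (h : LowerIndexBound α s)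
    (hpos : ∀ t ≥ (1:ℝ), 0 < α t) (n : ℕ) :
    ∃ C > (0:ℝ), ∀ ξ : EuclideanSpace ℝ (Fin n), (1 + ‖ξ‖ ^ 2) ^ s ≤ C * wt α ξ ^ 2 := by
  obtain ⟨c, hc, hbound⟩ := h
  have hα1 := hpos 1 le_rfl
  refine ⟨((c * α 1) ^ 2)⁻¹, by positivity, fun ξ => ?_⟩
  set l := √(1 + ‖ξ‖ ^ 2)
  have hl := one_le_sqrt_one_add_sq ‖ξ‖
  have hαl : c * α 1 * l ^ s ≤ α l := by
    have := hbound 1 le_rfl l hl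
    rwa [mul_one, le_div_iff₀ hα1, mul_right_comm] at this
  calc (1 + ‖ξ‖ ^ 2) ^ s = ((c * α 1) ^ 2)⁻¹ * (c * α 1 * l ^ s) ^ 2 := by
        rw [mul_pow _ (l ^ s), sqrt_one_add_sq_rpow_sq, inv_mul_cancel_left₀ (by positivity)]
    _ ≤ ((c * α 1) ^ 2)⁻¹ * wt α ξ ^ 2 := by
        gcongr
        exact hαl

end Weight

lemma integrable_mul_sq_norm_and_integral_le {X E : Type*} [MeasurableSpace X] {μ : Measure X}
    [NormedAddCommGroup E] {u v : X → ℝ} {W : X → E} {C : ℝ} (hu : AEStronglyMeasurable u μ)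
    (hW : AEStronglyMeasurable W μ) (hu0 : ∀ x, 0 ≤ u x) (huv : ∀ x, u x ≤ C * v x)
    (hv : Integrable (fun x => v x * ‖W x‖ ^ 2) μ) :
    Integrable (fun x => u x * ‖W x‖ ^ 2) μ ∧
      ∫ x, u x * ‖W x‖ ^ 2 ∂μ ≤ C * ∫ x, v x * ‖W x‖ ^ 2 ∂μ := by
  have hle : ∀ x, u x * ‖W x‖ ^ 2 ≤ C * (v x * ‖W x‖ ^ 2) := fun x => by
    rw [← mul_assoc]
    exact mul_le_mul_of_nonneg_right (huv x) (by positivity)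
  have hint : Integrable (fun x => u x * ‖W x‖ ^ 2) μ := by
    refine (hv.const_mul C).mono' (hu.mul (hW.norm.pow 2)) (ae_of_all _ fun x => ?_)
    rw [Real.norm_of_nonneg (mul_nonneg (hu0 x) (by positivity))]
    exact hle x
  refine ⟨hint, ?_⟩
  rw [← integral_const_mul]
  exact integral_mono hint (hv.const_mul C) hle

/-- continuous embeddings `H^{(s₁)}(ℝⁿ) ↪ H^α(ℝⁿ) ↪ H^{(s₀)}(ℝⁿ)` for
`s₀ < σ₀(α)` and `s₁ > σ₁(α)`, with `H^α` described on the Fourier side as the weighted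
`L²`-space of Fourier transforms `W = ŵ`. -/
theorem hormander_sobolev_embeddings (n : ℕ) (α : ℝ → ℝ) (hα : RO α) :
    (∀ s₀ < sigma0 α, ∃ C > (0:ℝ), ∀ W : EuclideanSpace ℝ (Fin n) → ℂ, Measurable W →
      Integrable (fun ξ => (wt α ξ) ^ 2 * ‖W ξ‖ ^ 2) →
        Integrable (fun ξ : EuclideanSpace ℝ (Fin n) =>
            ((1:ℝ) + ‖ξ‖ ^ 2) ^ s₀ * ‖W ξ‖ ^ 2) ∧
          ∫ ξ : EuclideanSpace ℝ (Fin n), ((1:ℝ) + ‖ξ‖ ^ 2) ^ s₀ * ‖W ξ‖ ^ 2 ≤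
            C * ∫ ξ, (wt α ξ) ^ 2 * ‖W ξ‖ ^ 2) ∧
    (∀ s₁ > sigma1 α, ∃ C > (0:ℝ), ∀ W : EuclideanSpace ℝ (Fin n) → ℂ, Measurable W →
      Integrable (fun ξ : EuclideanSpace ℝ (Fin n) =>
          ((1:ℝ) + ‖ξ‖ ^ 2) ^ s₁ * ‖W ξ‖ ^ 2) →
        Integrable (fun ξ => (wt α ξ) ^ 2 * ‖W ξ‖ ^ 2) ∧
          ∫ ξ, (wt α ξ) ^ 2 * ‖W ξ‖ ^ 2 ≤
            C * ∫ ξ : EuclideanSpace ℝ (Fin n), ((1:ℝ) + ‖ξ‖ ^ 2) ^ s₁ * ‖W ξ‖ ^ 2) := by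
  have hpos := hα.2.1
  have hwt : Measurable fun ξ : EuclideanSpace ℝ (Fin n) => wt α ξ ^ 2 :=
    (hα.1.comp (by fun_prop)).pow_const 2
  refine ⟨fun s₀ hs₀ => ?_, fun s₁ hs₁ => ?_⟩
  · obtain ⟨C, hC, hle⟩ := (hα.lowerIndexBound_of_lt_sigma0 hs₀).exists_rpow_le_wt_sq hpos n
    exact ⟨C, hC, fun W hW hint => integrable_mul_sq_norm_and_integral_le
      (by fun_prop : Measurable _).aestronglyMeasurable hW.aestronglyMeasurable (fun ξ => by positivity) hle hint⟩
  · obtain ⟨C, hC, hle⟩ := (hα.upperIndexBound_of_sigma1_lt hs₁).exists_wt_sq_le hpos n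
    exact ⟨C, hC, fun W hW hint => integrable_mul_sq_norm_and_integral_le
      hwt.aestronglyMeasurable hW.aestronglyMeasurable (fun ξ => by positivity) hle hint⟩
end

section
/- For α, η ∈ RO, the embedding H^η(ℝⁿ) ↪ H^α(ℝⁿ) holds and is continuous if and only if the function α/η is bounded in a neighborhood of infinity. -/
open MeasureTheory

/-!
Testing the embedding inequality on the indicator of the annulus `{t ≤ ⟨ξ⟩ ≤ b t}`, on which
both weights are comparable to their values at `t` by the RO property, gives
`α(t) ≤ C' η(t)` for every `t ≥ 1`. Conversely, an RO function is bounded above and below by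
positive constants on every compact `[1, T]`, so a bound of `α/η` near infinity extends to all
of `[1, ∞)`, and the pointwise inequality `α(⟨ξ⟩)² ≤ M² η(⟨ξ⟩)²` integrates to the embedding.
-/

open Set

namespace RO

variable {α η : ℝ → ℝ}

lemma pos (hα : RO α) {t : ℝ} (ht : 1 ≤ t) : 0 < α t := hα.2.1 t ht

lemma exists_le_mul_of_mem_Icc (hα : RO α) :
    ∃ b > 1, ∃ c > 0, ∀ t ≥ 1, ∀ s ∈ Icc t (b * t), α s ≤ c * α t ∧ α t ≤ c * α s := by
  obtain ⟨-, hpos, b, hb, c, hc, h⟩ := hα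
  refine ⟨b, hb, c, by positivity, fun t ht s hs => ?_⟩
  have ht0 : 0 < t := by positivity
  obtain ⟨hlow, hupp⟩ := h t ht (s / t) ⟨(one_le_div ht0).2 hs.1, (div_le_iff₀ ht0).2 hs.2⟩
  rw [div_mul_cancel₀ s ht0.ne'] at hlow hupp
  exact ⟨(div_le_iff₀ (hpos t ht)).1 hupp,
    (inv_mul_le_iff₀ (by positivity)).1 ((le_div_iff₀ (hpos t ht)).1 hlow)⟩

lemma exists_le_mul_of_mem_Icc_one (hα : RO α) (T : ℝ) :
    ∃ K > 0, ∀ t ∈ Icc 1 T, α t ≤ K * α 1 ∧ α 1 ≤ K * α t := by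
  obtain ⟨b, hb, c, hc, h⟩ := hα.exists_le_mul_of_mem_Icc
  have hpow : ∀ k : ℕ, ∀ t ∈ Icc 1 (b ^ k), α t ≤ c ^ k * α 1 ∧ α 1 ≤ c ^ k * α t := by
    intro k
    induction k with
    | zero =>
      intro t ht
      rw [pow_zero, Icc_self, mem_singleton_iff] at ht
      simp [ht]
    | succ k ih =>
      intro t ht
      set s := max 1 (t / b)
      have hs : s ∈ Icc 1 (b ^ k) :=
        ⟨le_max_left _ _, max_le (one_le_pow₀ hb.le)
          ((div_le_iff₀ (by positivity)).2 (by rw [← pow_succ]; exact ht.2))⟩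
      have hts : t ∈ Icc s (b * s) :=
        ⟨max_le ht.1 (div_le_self (by linarith [ht.1]) hb.le),
          (div_le_iff₀' (by positivity)).1 (le_max_right _ _)⟩
      obtain ⟨hts_upp, hts_low⟩ := h s hs.1 t hts
      obtain ⟨hs_upp, hs_low⟩ := ih s hs
      have := hα.pos hs.1
      constructor
      · calc α t ≤ c * α s := hts_upp
          _ ≤ c * (c ^ k * α 1) := by gcongr
          _ = c ^ (k + 1) * α 1 := by ring
      · calc α 1 ≤ c ^ k * α s := hs_low
          _ ≤ c ^ k * (c * α t) := by gcongr
          _ = c ^ (k + 1) * α t := by ring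
  obtain ⟨k, hk⟩ := pow_unbounded_of_one_lt T hb
  exact ⟨c ^ k, by positivity, fun t ht => hpow k t ⟨ht.1, ht.2.trans hk.le⟩⟩

lemma exists_le_mul_of_div_le (hα : RO α) (hη : RO η) {T c : ℝ}
    (h : ∀ t ≥ T, α t / η t ≤ c) : ∃ M > 0, ∀ t ≥ 1, α t ≤ M * η t := by
  obtain ⟨K, hK, hKα⟩ := hα.exists_le_mul_of_mem_Icc_one T
  obtain ⟨L, hL, hLη⟩ := hη.exists_le_mul_of_mem_Icc_one T
  have hα1 := hα.pos le_rfl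
  have hη1 := hη.pos le_rfl
  refine ⟨max 1 (max c (K * L * α 1 / η 1)), by positivity, fun t ht => ?_⟩
  have hηt := hη.pos ht
  rcases le_total T t with hT | hT
  · calc α t ≤ c * η t := (div_le_iff₀ hηt).1 (h t hT)
      _ ≤ _ := by gcongr; exact le_max_of_le_right (le_max_left _ _)
  · calc α t ≤ K * α 1 := (hKα t ⟨ht, hT⟩).1
      _ = K * α 1 / η 1 * η 1 := by field_simp
      _ ≤ K * α 1 / η 1 * (L * η t) := by gcongr; exact (hLη t ⟨ht, hT⟩).2
      _ = K * L * α 1 / η 1 * η t := by ring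
      _ ≤ _ := by gcongr; exact le_max_of_le_right (le_max_right _ _)

end RO

section WeightedIntegral

variable {X : Type*} [MeasurableSpace X] {μ : Measure X} {f g : X → ℝ}

lemma integrable_and_integral_le_of_sq_le {K : ℝ} (hf : Measurable f)
    (hfg : ∀ x, f x ^ 2 ≤ K * g x ^ 2) {W : X → ℂ} (hW : Measurable W)
    (hg : Integrable (fun x => g x ^ 2 * ‖W x‖ ^ 2) μ) :
    Integrable (fun x => f x ^ 2 * ‖W x‖ ^ 2) μ ∧
      ∫ x, f x ^ 2 * ‖W x‖ ^ 2 ∂μ ≤ K * ∫ x, g x ^ 2 * ‖W x‖ ^ 2 ∂μ := by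
  have hpt : ∀ x, f x ^ 2 * ‖W x‖ ^ 2 ≤ K * (g x ^ 2 * ‖W x‖ ^ 2) := fun x => by
    rw [← mul_assoc]; exact mul_le_mul_of_nonneg_right (hfg x) (by positivity)
  have hf' : Integrable (fun x => f x ^ 2 * ‖W x‖ ^ 2) μ :=
    (hg.const_mul K).mono' (by fun_prop) (ae_of_all _ fun x => by
      rw [Real.norm_of_nonneg (by positivity)]; exact hpt x)
  refine ⟨hf', ?_⟩
  rw [← integral_const_mul]
  exact integral_mono hf' (hg.const_mul K) hpt

lemma sq_le_mul_sq_of_integral_le {C a b : ℝ} {A : Set X} (hg : Measurable g) (hC : 0 ≤ C)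
    (hA : MeasurableSet A) (hA0 : μ A ≠ 0) (hAtop : μ A ≠ ⊤) (ha : 0 ≤ a)
    (hfa : ∀ x ∈ A, a ≤ f x) (hgb : ∀ x ∈ A, |g x| ≤ b)
    (hint : ∀ W : X → ℂ, Measurable W → Integrable (fun x => g x ^ 2 * ‖W x‖ ^ 2) μ →
      Integrable (fun x => f x ^ 2 * ‖W x‖ ^ 2) μ)
    (hle : ∀ W : X → ℂ, Measurable W → Integrable (fun x => g x ^ 2 * ‖W x‖ ^ 2) μ →
      ∫ x, f x ^ 2 * ‖W x‖ ^ 2 ∂μ ≤ C * ∫ x, g x ^ 2 * ‖W x‖ ^ 2 ∂μ) :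
    a ^ 2 ≤ C * b ^ 2 := by
  set W : X → ℂ := A.indicator 1
  have hW : Measurable W := measurable_const.indicator hA
  have hWeight : ∀ h : X → ℝ, (fun x => h x ^ 2 * ‖W x‖ ^ 2) = A.indicator fun x => h x ^ 2 :=
    fun h => funext fun x => by by_cases hx : x ∈ A <;> simp [W, hx]
  have hgb2 : ∀ x ∈ A, ‖g x ^ 2‖ ≤ b ^ 2 := fun x hx => by
    rw [norm_pow, Real.norm_eq_abs]; exact pow_le_pow_left₀ (abs_nonneg _) (hgb x hx) 2
  have hgW : Integrable (fun x => g x ^ 2 * ‖W x‖ ^ 2) μ := by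
    rw [hWeight, integrable_indicator_iff hA]
    exact Measure.integrableOn_of_bounded hAtop (hg.pow_const 2).aestronglyMeasurable
      (ae_restrict_of_forall_mem hA hgb2)
  have hfA : IntegrableOn (fun x => f x ^ 2) A μ := by
    rw [← integrable_indicator_iff hA, ← hWeight]; exact hint W hW hgW
  have hineq := hle W hW hgW
  rw [hWeight, hWeight, integral_indicator hA, integral_indicator hA] at hineq
  have hμA : 0 < μ.real A := ENNReal.toReal_pos hA0 hAtop
  refine le_of_mul_le_mul_right ?_ hμA
  calc a ^ 2 * μ.real A ≤ ∫ x in A, f x ^ 2 ∂μ :=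
        setIntegral_ge_of_const_le_real hA hAtop
          (fun x hx => pow_le_pow_left₀ ha (hfa x hx) 2) hfA
    _ ≤ C * ∫ x in A, g x ^ 2 ∂μ := hineq
    _ ≤ C * (b ^ 2 * μ.real A) := by
        gcongr
        exact (Real.le_norm_self _).trans
          (norm_setIntegral_le_of_norm_le_const hAtop.lt_top hgb2)
    _ = C * b ^ 2 * μ.real A := by ring

end WeightedIntegral

section Annulus

variable {E : Type*} [NormedAddCommGroup E]

/-- The annulus `{t ≤ ⟨ξ⟩ ≤ u}` for the Japanese bracket `⟨ξ⟩ = √(1 + ‖ξ‖²)`. -/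
def bracketAnnulus (t u : ℝ) : Set E := {ξ | √(1 + ‖ξ‖ ^ 2) ∈ Icc t u}

lemma one_le_sqrt_one_add_norm_sq (ξ : E) : 1 ≤ √(1 + ‖ξ‖ ^ 2) :=
  Real.one_le_sqrt.2 (by nlinarith [sq_nonneg ‖ξ‖])

lemma exists_sqrt_one_add_norm_sq_eq [NormedSpace ℝ E] [Nontrivial E] {m : ℝ} (hm : 1 ≤ m) :
    ∃ ξ : E, √(1 + ‖ξ‖ ^ 2) = m := by
  obtain ⟨ξ, hξ⟩ := exists_norm_eq E (Real.sqrt_nonneg (m ^ 2 - 1))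
  refine ⟨ξ, ?_⟩
  rw [hξ, Real.sq_sqrt (by nlinarith), add_sub_cancel, Real.sqrt_sq (by linarith)]

lemma bracketAnnulus_subset_closedBall (t u : ℝ) :
    bracketAnnulus t u ⊆ Metric.closedBall (0 : E) u :=
  fun ξ hξ => by
    rw [mem_closedBall_zero_iff]
    refine le_trans ?_ hξ.2
    calc ‖ξ‖ = √(‖ξ‖ ^ 2) := (Real.sqrt_sq (norm_nonneg ξ)).symm
      _ ≤ √(1 + ‖ξ‖ ^ 2) := Real.sqrt_le_sqrt (by linarith)

variable [MeasurableSpace E]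

lemma measurableSet_bracketAnnulus [OpensMeasurableSpace E] (t u : ℝ) :
    MeasurableSet (bracketAnnulus t u : Set E) :=
  (show Measurable fun ξ : E => √(1 + ‖ξ‖ ^ 2) by fun_prop) measurableSet_Icc

lemma measure_bracketAnnulus_lt_top [ProperSpace E] (μ : Measure E) [IsFiniteMeasureOnCompacts μ]
    (t u : ℝ) : μ (bracketAnnulus t u) < ⊤ :=
  (measure_mono (bracketAnnulus_subset_closedBall t u)).trans_lt measure_closedBall_lt_top

lemma measure_bracketAnnulus_pos [NormedSpace ℝ E] [Nontrivial E] (μ : Measure E)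
    [μ.IsOpenPosMeasure] {t u : ℝ} (ht : 1 ≤ t) (htu : t < u) : 0 < μ (bracketAnnulus t u) := by
  have hopen : IsOpen {ξ : E | √(1 + ‖ξ‖ ^ 2) ∈ Ioo t u} :=
    isOpen_Ioo.preimage (by fun_prop)
  obtain ⟨ξ, hξ⟩ := exists_sqrt_one_add_norm_sq_eq (E := E) (m := (t + u) / 2) (by linarith)
  refine (hopen.measure_pos μ ⟨ξ, ?_⟩).trans_le (measure_mono fun ζ hζ => Ioo_subset_Icc_self hζ)
  show √(1 + ‖ξ‖ ^ 2) ∈ Ioo t u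
  rw [hξ]; constructor <;> linarith

end Annulus

lemma measurable_wt {α : ℝ → ℝ} (hα : Measurable α) (n : ℕ) :
    Measurable (wt α (n := n)) :=
  hα.comp (by fun_prop)

lemma RO.exists_le_mul_of_embedding {n : ℕ} (hn : 0 < n) {α η : ℝ → ℝ} (hα : RO α)
    (hη : RO η) {C : ℝ} (hC : 0 ≤ C)
    (hint : ∀ W : EuclideanSpace ℝ (Fin n) → ℂ, Measurable W →
      Integrable (fun ξ => (wt η ξ) ^ 2 * ‖W ξ‖ ^ 2) →
        Integrable (fun ξ => (wt α ξ) ^ 2 * ‖W ξ‖ ^ 2))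
    (hle : ∀ W : EuclideanSpace ℝ (Fin n) → ℂ, Measurable W →
      Integrable (fun ξ => (wt η ξ) ^ 2 * ‖W ξ‖ ^ 2) →
        ∫ ξ, (wt α ξ) ^ 2 * ‖W ξ‖ ^ 2 ≤ C * ∫ ξ, (wt η ξ) ^ 2 * ‖W ξ‖ ^ 2) :
    ∃ M, ∀ t ≥ 1, α t ≤ M * η t := by
  have : Nontrivial (EuclideanSpace ℝ (Fin n)) :=
    Module.finrank_pos_iff.1 (by rwa [finrank_euclideanSpace_fin])
  obtain ⟨bα, hbα, cα, hcα, hα'⟩ := hα.exists_le_mul_of_mem_Icc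
  obtain ⟨bη, hbη, cη, hcη, hη'⟩ := hη.exists_le_mul_of_mem_Icc
  refine ⟨cα * √C * cη, fun t ht => ?_⟩
  have hαt := hα.pos ht
  have hηt := hη.pos ht
  set A : Set (EuclideanSpace ℝ (Fin n)) := bracketAnnulus t (min bα bη * t)
  have hAα : ∀ ξ ∈ A, α t / cα ≤ wt α ξ := fun ξ hξ =>
    (div_le_iff₀' hcα).2 (hα' t ht _ (Icc_subset_Icc_right
      (by gcongr; exact min_le_left _ _) hξ)).2
  have hAη : ∀ ξ ∈ A, |wt η ξ| ≤ cη * η t := fun ξ hξ => by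
    rw [abs_of_pos (show 0 < wt η ξ from hη.pos (one_le_sqrt_one_add_norm_sq ξ))]
    exact (hη' t ht _ (Icc_subset_Icc_right (by gcongr; exact min_le_right _ _) hξ)).1
  have hA0 : volume A ≠ 0 :=
    (measure_bracketAnnulus_pos volume ht
      (lt_mul_of_one_lt_left (by positivity) (lt_min hbα hbη))).ne'
  have hsq : (α t / cα) ^ 2 ≤ C * (cη * η t) ^ 2 :=
    sq_le_mul_sq_of_integral_le (measurable_wt hη.1 n) hC (measurableSet_bracketAnnulus _ _)
      hA0 (measure_bracketAnnulus_lt_top volume _ _).ne (by positivity) hAα hAη hint hle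
  have hroot : α t / cα ≤ √C * (cη * η t) := by
    rw [← Real.sqrt_sq (by positivity : 0 ≤ α t / cα),
      ← Real.sqrt_sq (by positivity : 0 ≤ cη * η t), ← Real.sqrt_mul hC]
    exact Real.sqrt_le_sqrt hsq
  calc α t = cα * (α t / cα) := by field_simp
    _ ≤ cα * (√C * (cη * η t)) := by gcongr
    _ = cα * √C * cη * η t := by ring

/-- for `α, η ∈ RO`, the continuous embedding `H^η(ℝⁿ) ↪ H^α(ℝⁿ)`
(described on the Fourier side) holds iff `α/η` is bounded near infinity. -/
theorem embedding_iff_ratio_bounded (n : ℕ) (hn : 0 < n) (α η : ℝ → ℝ)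
    (hα : RO α) (hη : RO η) :
    ((∀ W : EuclideanSpace ℝ (Fin n) → ℂ, Measurable W →
        Integrable (fun ξ => (wt η ξ) ^ 2 * ‖W ξ‖ ^ 2) →
          Integrable (fun ξ => (wt α ξ) ^ 2 * ‖W ξ‖ ^ 2)) ∧
      ∃ C > (0:ℝ), ∀ W : EuclideanSpace ℝ (Fin n) → ℂ, Measurable W →
        Integrable (fun ξ => (wt η ξ) ^ 2 * ‖W ξ‖ ^ 2) →
          ∫ ξ, (wt α ξ) ^ 2 * ‖W ξ‖ ^ 2 ≤ C * ∫ ξ, (wt η ξ) ^ 2 * ‖W ξ‖ ^ 2)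
    ↔ ∃ T c : ℝ, ∀ t ≥ T, α t / η t ≤ c := by
  constructor
  · rintro ⟨hint, C, hC, hle⟩
    obtain ⟨M, hM⟩ := RO.exists_le_mul_of_embedding hn hα hη hC.le hint hle
    exact ⟨1, M, fun t ht => (div_le_iff₀ (hη.pos ht)).2 (hM t ht)⟩
  · rintro ⟨T, c, h⟩
    obtain ⟨M, hM, hαη⟩ := hα.exists_le_mul_of_div_le hη h
    have hsq : ∀ ξ : EuclideanSpace ℝ (Fin n), wt α ξ ^ 2 ≤ M ^ 2 * wt η ξ ^ 2 := fun ξ => by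
      have hs := one_le_sqrt_one_add_norm_sq ξ
      rw [← mul_pow]
      exact pow_le_pow_left₀ (hα.pos hs).le (hαη _ hs) 2
    have hemb := fun W (hW : Measurable W) hWη =>
      integrable_and_integral_le_of_sq_le (μ := volume) (measurable_wt hα.1 n) hsq hW hWη
    exact ⟨fun W hW hWη => (hemb W hW hWη).1, M ^ 2, by positivity,
      fun W hW hWη => (hemb W hW hWη).2⟩
end

section
/- Let α ∈ RO and let p ≥ 0 be an integer with n ≥ 1. If ∫₁^∞ t^{2p+n−1} α(t)^{−2} dt < ∞, then every w ∈ H^α(ℝⁿ) coincides almost everywhere with a function of class C^p on ℝⁿ, all of whose derivatives up to order p are bounded; moreover the embedding H^α(ℝⁿ) ↪ C^p_b(ℝⁿ) is continuous. -/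
open MeasureTheory FourierTransform Set Module
open scoped Real

theorem integral_sqrt_mul_le_sqrt_mul_sqrt {X : Type*} [MeasurableSpace X] {μ : Measure X}
    {F G : X → ℝ} (hF : 0 ≤ᵐ[μ] F) (hG : 0 ≤ᵐ[μ] G) (hFi : Integrable F μ)
    (hGi : Integrable G μ) :
    Integrable (fun x => √(F x * G x)) μ ∧
      ∫ x, √(F x * G x) ∂μ ≤ √(∫ x, F x ∂μ) * √(∫ x, G x ∂μ) := by
  have memLp_sqrt {H : X → ℝ} (hH : 0 ≤ᵐ[μ] H) (hHi : Integrable H μ) :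
      MemLp (fun x => √(H x)) 2 μ :=
    (memLp_two_iff_integrable_sq hHi.aemeasurable.sqrt.aestronglyMeasurable).2 <|
      hHi.congr <| hH.mono fun x hx => (Real.sq_sqrt hx).symm
  have integral_sqrt_rpow_two {H : X → ℝ} (hH : 0 ≤ᵐ[μ] H) :
      ∫ x, √(H x) ^ (2:ℝ) ∂μ = ∫ x, H x ∂μ :=
    integral_congr_ae <| hH.mono fun x hx => by simp only [Real.rpow_two, Real.sq_sqrt hx]
  have hsqrt_mul : (fun x => √(F x) * √(G x)) =ᵐ[μ] fun x => √(F x * G x) :=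
    hF.mono fun x hx => (Real.sqrt_mul hx _).symm
  refine ⟨((memLp_sqrt hF hFi).integrable_mul (memLp_sqrt hG hGi)).congr hsqrt_mul, ?_⟩
  have holder := integral_mul_le_Lp_mul_Lq_of_nonneg Real.HolderConjugate.two_two
    (.of_forall fun x => Real.sqrt_nonneg (F x)) (.of_forall fun x => Real.sqrt_nonneg (G x))
    (by simpa using memLp_sqrt hF hFi) (by simpa using memLp_sqrt hG hGi)
  rwa [integral_congr_ae hsqrt_mul, integral_sqrt_rpow_two hF, integral_sqrt_rpow_two hG,
    ← Real.sqrt_eq_rpow, ← Real.sqrt_eq_rpow] at holder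

theorem le_pow_mul_of_le_mul {α : ℝ → ℝ} {b c : ℝ} (hpos : ∀ t ≥ (1:ℝ), 0 < α t) (hb : 1 < b)
    (hc : 1 ≤ c) (hstep : ∀ t ≥ (1:ℝ), ∀ l ∈ Icc (1:ℝ) b, α t ≤ c * α (l * t)) (m : ℕ) :
    ∀ t ≥ (1:ℝ), ∀ l ∈ Icc (1:ℝ) (b ^ m), α t ≤ c ^ m * α (l * t) := by
  induction m with
  | zero =>
    intro t _ l hl
    simp [le_antisymm (by simpa using hl.2) hl.1]
  | succ m ih =>
    intro t ht l ⟨hl1, hl⟩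
    rcases le_or_gt l b with hlb | hbl
    · calc α t ≤ c * α (l * t) := hstep t ht l ⟨hl1, hlb⟩
        _ ≤ c ^ (m + 1) * α (l * t) := by
          gcongr
          · exact (hpos _ (one_le_mul_of_one_le_of_one_le hl1 ht)).le
          · exact le_self_pow₀ hc (Nat.succ_ne_zero m)
    · have hb0 : 0 < b := zero_lt_one.trans hb
      have hlb : l / b ∈ Icc (1:ℝ) (b ^ m) :=
        ⟨(one_le_div hb0).2 hbl.le, (div_le_iff₀ hb0).2 (by rwa [← pow_succ])⟩
      calc α t ≤ c * α (b * t) := hstep t ht b ⟨hb.le, le_rfl⟩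
        _ ≤ c * (c ^ m * α (l / b * (b * t))) := by
          gcongr
          exact ih (b * t) (one_le_mul_of_one_le_of_one_le hb.le ht) _ hlb
        _ = c ^ (m + 1) * α (l * t) := by
          rw [show l / b * (b * t) = l * t by field_simp, pow_succ]; ring

theorem RO.exists_inv_sq_le {α : ℝ → ℝ} (hα : RO α) :
    ∃ K > 0, ∀ t ≥ (1:ℝ), ∀ s ∈ Icc t (2 * t), (α s)⁻¹ ^ 2 ≤ K * (α t)⁻¹ ^ 2 := by
  obtain ⟨-, hpos, b, hb, c, hc, hratio⟩ := hα
  obtain ⟨m, hm⟩ := pow_unbounded_of_one_lt 2 hb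
  have hstep : ∀ t ≥ (1:ℝ), ∀ l ∈ Icc (1:ℝ) b, α t ≤ c * α (l * t) := fun t ht l hl => by
    have := (hratio t ht l hl).1
    rwa [inv_le_iff_one_le_mul₀' (by positivity), ← mul_div_assoc,
      one_le_div (hpos t ht)] at this
  refine ⟨(c ^ m) ^ 2, by positivity, fun t ht s ⟨hts, hst⟩ => ?_⟩
  have ht0 : 0 < t := zero_lt_one.trans_le ht
  have hαt := hpos t ht
  have hαs := hpos s (ht.trans hts)
  have hle : α t ≤ c ^ m * α s := by
    simpa [div_mul_cancel₀ s ht0.ne'] using le_pow_mul_of_le_mul hpos hb hc hstep m t ht (s / t)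
      ⟨(one_le_div ht0).2 hts, (div_le_iff₀ ht0).2 (by nlinarith)⟩
  rw [← mul_pow, ← div_eq_mul_inv]
  gcongr
  rwa [le_div_iff₀ hαt, inv_mul_eq_div, div_le_iff₀ hαs]

theorem RO.integrableOn_Ioi_pow_mul_one_add_sq_pow_mul_inv_sq {α : ℝ → ℝ} (hα : RO α)
    {p d : ℕ} (hd : 1 ≤ d)
    (hint : IntegrableOn (fun t : ℝ => t ^ (2 * (p:ℝ) + d - 1) * ((α t)⁻¹) ^ 2) (Ici 1)) :
    IntegrableOn (fun r : ℝ => r ^ (d - 1) * ((1 + r ^ 2) ^ p * (α √(1 + r ^ 2))⁻¹ ^ 2))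
      (Ioi 0) := by
  obtain ⟨K, hK, hKα⟩ := hα.exists_inv_sq_le
  have hmeas : Measurable fun r : ℝ =>
      r ^ (d - 1) * ((1 + r ^ 2) ^ p * (α √(1 + r ^ 2))⁻¹ ^ 2) := by
    have := hα.1
    fun_prop
  have hnonneg (r : ℝ) (hr : 0 ≤ r) :
      0 ≤ r ^ (d - 1) * ((1 + r ^ 2) ^ p * (α √(1 + r ^ 2))⁻¹ ^ 2) := by positivity
  rw [← Ioc_union_Ioi_eq_Ioi zero_le_one]
  refine IntegrableOn.union ?_ ?_
  · refine IntegrableOn.of_bound measure_Ioc_lt_top hmeas.aestronglyMeasurable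
      (2 ^ p * (K * (α 1)⁻¹ ^ 2)) ?_
    refine (ae_restrict_mem measurableSet_Ioc).mono fun r ⟨hr0, hr1⟩ => ?_
    have hs : √(1 + r ^ 2) ∈ Icc 1 (2 * 1) :=
      ⟨Real.one_le_sqrt.2 (by nlinarith), Real.sqrt_le_iff.2 ⟨by norm_num, by nlinarith⟩⟩
    rw [Real.norm_of_nonneg (hnonneg r hr0.le), ← one_mul (2 ^ p * _)]
    gcongr
    · exact pow_le_one₀ hr0.le hr1
    · nlinarith
    · exact hKα 1 le_rfl _ hs
  · refine (hint.mono_set Ioi_subset_Ici_self |>.const_mul (2 ^ p * K)).mono'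
      hmeas.aestronglyMeasurable ?_
    refine (ae_restrict_mem measurableSet_Ioi).mono fun r (hr : 1 < r) => ?_
    have hs : √(1 + r ^ 2) ∈ Icc r (2 * r) :=
      ⟨Real.le_sqrt_of_sq_le (by linarith), Real.sqrt_le_iff.2 ⟨by linarith, by nlinarith⟩⟩
    have hpow : r ^ (2 * (p:ℝ) + d - 1) = r ^ (d - 1) * (r ^ 2) ^ p := by
      rw [← pow_mul, ← pow_add, ← Real.rpow_natCast]
      push_cast [hd]
      ring_nf
    rw [Real.norm_of_nonneg (hnonneg r (by linarith)), hpow]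
    calc r ^ (d - 1) * ((1 + r ^ 2) ^ p * (α √(1 + r ^ 2))⁻¹ ^ 2)
        ≤ r ^ (d - 1) * ((2 * r ^ 2) ^ p * (K * (α r)⁻¹ ^ 2)) := by
          gcongr
          · nlinarith
          · exact hKα r hr.le _ hs
      _ = 2 ^ p * K * (r ^ (d - 1) * (r ^ 2) ^ p * (α r)⁻¹ ^ 2) := by ring

theorem RO.integrable_one_add_norm_sq_pow_mul_inv_sq {E : Type*} [NormedAddCommGroup E]
    [NormedSpace ℝ E] [FiniteDimensional ℝ E] [Nontrivial E] [MeasurableSpace E] [BorelSpace E]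
    (μ : Measure E) [μ.IsAddHaarMeasure] {α : ℝ → ℝ} (hα : RO α) {p : ℕ}
    (hint : IntegrableOn
      (fun t : ℝ => t ^ (2 * (p:ℝ) + finrank ℝ E - 1) * ((α t)⁻¹) ^ 2) (Ici 1)) :
    Integrable (fun ξ : E => (1 + ‖ξ‖ ^ 2) ^ p * (α √(1 + ‖ξ‖ ^ 2))⁻¹ ^ 2) μ :=
  (integrable_fun_norm_addHaar μ (f := fun r => (1 + r ^ 2) ^ p * (α √(1 + r ^ 2))⁻¹ ^ 2)).2 <|
    hα.integrableOn_Ioi_pow_mul_one_add_sq_pow_mul_inv_sq finrank_pos hint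

theorem pow_mul_le_sqrt_one_add_sq_pow_mul {x a w : ℝ} (hx : 0 ≤ x) (ha : 0 ≤ a) (hw : w ≠ 0)
    {k p : ℕ} (hk : k ≤ p) :
    x ^ k * a ≤ √((1 + x ^ 2) ^ p * w⁻¹ ^ 2 * (w ^ 2 * a ^ 2)) := by
  calc x ^ k * a = √((x ^ 2) ^ k * a ^ 2) := by
        rw [← pow_mul, mul_comm 2 k, pow_mul, ← mul_pow, Real.sqrt_sq (by positivity)]
    _ ≤ √((1 + x ^ 2) ^ p * a ^ 2) := by
        gcongr
        calc (x ^ 2) ^ k ≤ (1 + x ^ 2) ^ k := by gcongr; linarith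
          _ ≤ (1 + x ^ 2) ^ p := pow_le_pow_right₀ (by nlinarith) hk
    _ = √((1 + x ^ 2) ^ p * w⁻¹ ^ 2 * (w ^ 2 * a ^ 2)) := by field_simp

theorem integrable_norm_pow_mul_norm_and_integral_le {E F : Type*} [NormedAddCommGroup E]
    [MeasurableSpace E] [OpensMeasurableSpace E] [NormedAddCommGroup F] {μ : Measure E}
    {W : E → F} {w : E → ℝ} {p k : ℕ} (hW : AEStronglyMeasurable W μ) (hw : ∀ ξ, w ξ ≠ 0)
    (hweight : Integrable (fun ξ => (1 + ‖ξ‖ ^ 2) ^ p * (w ξ)⁻¹ ^ 2) μ)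
    (hWw : Integrable (fun ξ => w ξ ^ 2 * ‖W ξ‖ ^ 2) μ) (hk : k ≤ p) :
    Integrable (fun ξ => ‖ξ‖ ^ k * ‖W ξ‖) μ ∧
      ∫ ξ, ‖ξ‖ ^ k * ‖W ξ‖ ∂μ ≤
        √(∫ ξ, (1 + ‖ξ‖ ^ 2) ^ p * (w ξ)⁻¹ ^ 2 ∂μ) * √(∫ ξ, w ξ ^ 2 * ‖W ξ‖ ^ 2 ∂μ) := by
  obtain ⟨hsqrt, hle⟩ := integral_sqrt_mul_le_sqrt_mul_sqrt
    (.of_forall fun ξ => by positivity) (.of_forall fun ξ => by positivity) hweight hWw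
  have hpt (ξ : E) := pow_mul_le_sqrt_one_add_sq_pow_mul (norm_nonneg ξ) (norm_nonneg (W ξ))
    (hw ξ) hk
  have hint : Integrable (fun ξ => ‖ξ‖ ^ k * ‖W ξ‖) μ :=
    hsqrt.mono' ((continuous_norm.pow k).aestronglyMeasurable.mul hW.norm)
      (.of_forall fun ξ => by rw [Real.norm_of_nonneg (by positivity)]; exact hpt ξ)
  exact ⟨hint, (integral_mono hint hsqrt hpt).trans hle⟩

theorem integrable_norm_pow_mul_norm_comp_neg {V E : Type*} [NormedAddCommGroup V]
    [MeasurableSpace V] [BorelSpace V] [NormedAddCommGroup E] {μ : Measure V} [μ.IsNegInvariant]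
    {f : V → E} {n : ℕ} (hf : Integrable (fun v => ‖v‖ ^ n * ‖f v‖) μ) :
    Integrable (fun v => ‖v‖ ^ n * ‖f (-v)‖) μ := by
  simpa using hf.comp_neg

section Fourier

variable {V E : Type*} [NormedAddCommGroup V] [InnerProductSpace ℝ V] [FiniteDimensional ℝ V]
  [MeasurableSpace V] [BorelSpace V] [NormedAddCommGroup E] [NormedSpace ℂ E] {f : V → E}
  {N : ℕ∞}

theorem Real.norm_iteratedFDeriv_fourier_le
    (hf : ∀ n : ℕ, n ≤ N → Integrable (fun v => ‖v‖ ^ n * ‖f v‖))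
    (h'f : AEStronglyMeasurable f) {n : ℕ} (hn : n ≤ N) (w : V) :
    ‖iteratedFDeriv ℝ n (𝓕 f) w‖ ≤ (2 * π) ^ n * ∫ v, ‖v‖ ^ n * ‖f v‖ := by
  rw [Real.iteratedFDeriv_fourier hf h'f hn, ← integral_const_mul]
  refine (VectorFourier.norm_fourierIntegral_le_integral_norm _ _ _ _ _).trans <|
    integral_mono_of_nonneg (.of_forall fun v => norm_nonneg _) ((hf n hn).const_mul _)
      (.of_forall fun v => ?_)
  refine (VectorFourier.norm_fourierPowSMulRight_le _ _ _ _).trans ?_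
  have hL : 2 * π * ‖innerSL ℝ (E := V)‖ ≤ 2 * π :=
    mul_le_of_le_one_right (by positivity) (norm_innerSL_le ℝ)
  simp only [← mul_assoc]
  gcongr

theorem Real.contDiff_fourierInv
    (hf : ∀ n : ℕ, n ≤ N → Integrable (fun v => ‖v‖ ^ n * ‖f v‖)) :
    ContDiff ℝ N (𝓕⁻ f) := by
  rw [Real.fourierInv_eq_fourier_comp_neg]
  exact Real.contDiff_fourier fun n hn => integrable_norm_pow_mul_norm_comp_neg (hf n hn)

theorem Real.norm_iteratedFDeriv_fourierInv_le
    (hf : ∀ n : ℕ, n ≤ N → Integrable (fun v => ‖v‖ ^ n * ‖f v‖))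
    (h'f : AEStronglyMeasurable f) {n : ℕ} (hn : n ≤ N) (w : V) :
    ‖iteratedFDeriv ℝ n (𝓕⁻ f) w‖ ≤ (2 * π) ^ n * ∫ v, ‖v‖ ^ n * ‖f v‖ := by
  rw [Real.fourierInv_eq_fourier_comp_neg]
  refine (Real.norm_iteratedFDeriv_fourier_le
    (fun n hn => integrable_norm_pow_mul_norm_comp_neg (hf n hn))
    (h'f.comp_measurePreserving (Measure.measurePreserving_neg volume)) hn w).trans_eq ?_
  congr 1
  simpa using integral_neg_eq_self (fun v => ‖v‖ ^ n * ‖f v‖) volume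

end Fourier

/-- Hörmander's embedding theorem `H^α(ℝⁿ) ↪ C^p_b(ℝⁿ)`. If
`∫₁^∞ t^{2p+n−1} α(t)^{−2} dt < ∞`, then every element of `H^α(ℝⁿ)` (given on the Fourier
side by `W = ŵ`) has the `C^p` representative `w = 𝓕⁻ W`, whose derivatives up to order `p`
are bounded, with a bound `C` independent of `W` (continuity of the embedding). -/
theorem hormander_embedding_Cp (n p : ℕ) (hn : 0 < n) (α : ℝ → ℝ) (hα : RO α)
    (hint : IntegrableOn
      (fun t : ℝ => t ^ (2 * (p:ℝ) + n - 1) * ((α t)⁻¹) ^ 2) (Set.Ici 1)) :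
    ∃ C > (0:ℝ), ∀ W : EuclideanSpace ℝ (Fin n) → ℂ, Measurable W →
      Integrable (fun ξ => (wt α ξ) ^ 2 * ‖W ξ‖ ^ 2) →
        ContDiff ℝ p (𝓕⁻ W) ∧
        ∀ k ≤ p, ∀ x : EuclideanSpace ℝ (Fin n),
          ‖iteratedFDeriv ℝ k (𝓕⁻ W) x‖ ≤
            C * Real.sqrt (∫ ξ, (wt α ξ) ^ 2 * ‖W ξ‖ ^ 2) := by
  have : Nontrivial (EuclideanSpace ℝ (Fin n)) := ⟨⟨EuclideanSpace.single ⟨0, hn⟩ 1, 0, by simp⟩⟩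
  have hweight := hα.integrable_one_add_norm_sq_pow_mul_inv_sq
    (volume : Measure (EuclideanSpace ℝ (Fin n))) (p := p) (by simpa using hint)
  set A := ∫ ξ : EuclideanSpace ℝ (Fin n), (1 + ‖ξ‖ ^ 2) ^ p * (wt α ξ)⁻¹ ^ 2
  refine ⟨(2 * π) ^ p * (√A + 1), by positivity, fun W hW hWw => ?_⟩
  have hwt (ξ : EuclideanSpace ℝ (Fin n)) : wt α ξ ≠ 0 :=
    (hα.2.1 _ (Real.one_le_sqrt.2 (by nlinarith [norm_nonneg ξ]))).ne'
  have hmoment {k : ℕ} (hk : k ≤ p) := integrable_norm_pow_mul_norm_and_integral_le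
    hW.aestronglyMeasurable hwt hweight hWw hk
  have hintegrable (k : ℕ) (hk : (k : ℕ∞) ≤ p) := (hmoment (k := k) (by exact_mod_cast hk)).1
  refine ⟨Real.contDiff_fourierInv hintegrable, fun k hk x => ?_⟩
  have h2π : 1 ≤ 2 * π := by linarith [Real.pi_gt_three]
  calc ‖iteratedFDeriv ℝ k (𝓕⁻ W) x‖
      ≤ (2 * π) ^ k * ∫ ξ, ‖ξ‖ ^ k * ‖W ξ‖ :=
        Real.norm_iteratedFDeriv_fourierInv_le hintegrable hW.aestronglyMeasurable
          (by exact_mod_cast hk) x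
    _ ≤ (2 * π) ^ p * (√A * √(∫ ξ, (wt α ξ) ^ 2 * ‖W ξ‖ ^ 2)) := by
        gcongr
        exact (hmoment hk).2
    _ ≤ (2 * π) ^ p * (√A + 1) * √(∫ ξ, (wt α ξ) ^ 2 * ‖W ξ‖ ^ 2) := by
        rw [mul_assoc]
        gcongr
        exact le_add_of_nonneg_right zero_le_one
end

section
/- Let α ∈ RO and let s₀ < σ₀(α) and s₁ > σ₁(α). Define ψ(t) := t^{−s₀/(s₁−s₀)} α(t^{1/(s₁−s₀)}) for t ≥ 1 and ψ(t) := α(1) for 0 < t < 1. Then ψ belongs to the class 𝓑 (i.e., ψ is Borel measurable, positive, bounded on each compact interval [a,b] ⊂ (0,∞), and 1/ψ is bounded on each [r,∞) with r > 0) and ψ is pseudoconcave in a neighborhood of +∞. -/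
/-- The class `𝓑`: Borel measurable positive functions on `(0,∞)`, bounded on compact
subintervals, with `1/ψ` bounded on each `[r,∞)`, `r > 0`. -/
def ClassB (ψ : ℝ → ℝ) : Prop :=
  Measurable ψ ∧ (∀ t > (0:ℝ), 0 < ψ t) ∧
    (∀ a b : ℝ, 0 < a → a ≤ b → ∃ M : ℝ, ∀ t ∈ Set.Icc a b, ψ t ≤ M) ∧
    (∀ r > (0:ℝ), ∃ M : ℝ, ∀ t ≥ r, (ψ t)⁻¹ ≤ M)

/-- The interpolation parameter of formula (20):
`ψ(t) = t^{−s₀/(s₁−s₀)} α(t^{1/(s₁−s₀)})` for `t ≥ 1`, `ψ(t) = α(1)` for `0 < t < 1`. -/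
noncomputable def psiInterp (α : ℝ → ℝ) (s₀ s₁ : ℝ) : ℝ → ℝ := fun t =>
  if 1 ≤ t then t ^ (-s₀ / (s₁ - s₀)) * α (t ^ ((1:ℝ) / (s₁ - s₀))) else α 1

open Real Set Filter

/-- `sigma0 α` and `sigma1 α` are the supremum of the `p` with `HasLowerType α p` and the
infimum of the `q` with `HasUpperType α q`. -/
def HasLowerType (f : ℝ → ℝ) (p : ℝ) : Prop :=
  ∃ c > (0:ℝ), ∀ t ≥ (1:ℝ), ∀ l ≥ (1:ℝ), c * l ^ p ≤ f (l * t) / f t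

def HasUpperType (f : ℝ → ℝ) (q : ℝ) : Prop :=
  ∃ c > (0:ℝ), ∀ t ≥ (1:ℝ), ∀ l ≥ (1:ℝ), f (l * t) / f t ≤ c * l ^ q

section Types

variable {f : ℝ → ℝ} {p q : ℝ}

theorem HasLowerType.mono {p' : ℝ} (h : HasLowerType f p) (hp' : p' ≤ p) :
    HasLowerType f p' := by
  obtain ⟨c, hc, hf⟩ := h
  exact ⟨c, hc, fun t ht l hl => le_trans (by gcongr) (hf t ht l hl)⟩

theorem HasLowerType.le_of_hasUpperType (hp : HasLowerType f p) (hq : HasUpperType f q) :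
    p ≤ q := by
  obtain ⟨cp, hcp, hfp⟩ := hp
  obtain ⟨cq, hcq, hfq⟩ := hq
  by_contra! hqp
  obtain ⟨l, hl_big, hl⟩ := ((tendsto_rpow_atTop (sub_pos.2 hqp)).eventually_gt_atTop (cq / cp)
    |>.and (eventually_ge_atTop 1)).exists
  have hl0 : 0 < l := by linarith
  have hle : cp * l ^ p ≤ cq * l ^ q := (hfp 1 le_rfl l hl).trans (hfq 1 le_rfl l hl)
  have : l ^ (p - q) ≤ cq / cp := by
    rw [rpow_sub hl0, div_le_div_iff₀ (rpow_pos_of_pos hl0 q) hcp]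
    linarith
  linarith

theorem HasUpperType.hasLowerType_of_inv (hpos : ∀ t ≥ 1, 0 < f t)
    (h : HasUpperType (fun t => (f t)⁻¹) q) : HasLowerType f (-q) := by
  obtain ⟨c, hc, hf⟩ := h
  refine ⟨c⁻¹, inv_pos.2 hc, fun t ht l hl => ?_⟩
  have hlt : 0 < f (l * t) / f t :=
    div_pos (hpos _ (one_le_mul_of_one_le_of_one_le hl ht)) (hpos t ht)
  have := inv_anti₀ (inv_pos.2 hlt) (by simpa only [inv_div_inv, inv_div] using hf t ht l hl)
  rwa [inv_inv, mul_inv, ← rpow_neg (by linarith)] at this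

theorem HasLowerType.mul_le (h : HasLowerType f 0) (hpos : ∀ t ≥ 1, 0 < f t) :
    ∃ c > 0, ∀ t ≥ (1:ℝ), ∀ r ≥ t, c * f t ≤ f r := by
  obtain ⟨c, hc, hf⟩ := h
  refine ⟨c, hc, fun t ht r hr => ?_⟩
  have ht0 : 0 < t := by linarith
  have := hf t ht (r / t) ((one_le_div ht0).2 hr)
  rwa [rpow_zero, mul_one, div_mul_cancel₀ r ht0.ne', le_div_iff₀ (hpos t ht)] at this

theorem HasUpperType.le_mul (h : HasUpperType f q) (hpos : ∀ t ≥ 1, 0 < f t) :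
    ∃ c > 0, ∀ t ≥ (1:ℝ), ∀ r ≥ t, f r ≤ c * (r / t) ^ q * f t := by
  obtain ⟨c, hc, hf⟩ := h
  refine ⟨c, hc, fun t ht r hr => ?_⟩
  have ht0 : 0 < t := by linarith
  have := hf t ht (r / t) ((one_le_div ht0).2 hr)
  rwa [div_mul_cancel₀ r ht0.ne', div_le_iff₀ (hpos t ht)] at this

end Types

section RO

variable {f : ℝ → ℝ} {b c : ℝ}

theorem div_le_pow_succ_of_forall_Icc (hpos : ∀ t ≥ 1, 0 < f t) (hb : 1 ≤ b) (hc : 1 ≤ c)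
    (hf : ∀ t ≥ (1:ℝ), ∀ l ∈ Icc 1 b, f (l * t) / f t ≤ c) (n : ℕ) :
    ∀ t ≥ (1:ℝ), ∀ l ∈ Icc 1 (b ^ (n + 1)), f (l * t) / f t ≤ c ^ (n + 1) := by
  induction n with
  | zero => simpa using hf
  | succ n ih =>
    intro t ht l hl
    by_cases hlb : l ≤ b
    · exact (hf t ht l ⟨hl.1, hlb⟩).trans (le_self_pow₀ hc (by omega))
    have hb0 : 0 < b := by linarith
    have hlb' : l / b ∈ Icc 1 (b ^ (n + 1)) :=
      ⟨(one_le_div hb0).2 (not_le.1 hlb).le, (div_le_iff₀ hb0).2 (by rw [← pow_succ]; exact hl.2)⟩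
    set u := l / b * t
    have hu : 1 ≤ u := one_le_mul_of_one_le_of_one_le hlb'.1 ht
    calc f (l * t) / f t = f (b * u) / f u * (f u / f t) := by
          rw [show b * u = l * t by simp only [u]; field_simp]
          field_simp [(hpos u hu).ne']
      _ ≤ c * c ^ (n + 1) :=
          mul_le_mul (hf u hu b ⟨hb, le_rfl⟩) (ih t ht _ hlb')
            (div_pos (hpos u hu) (hpos t ht)).le (by positivity)
      _ = c ^ (n + 1 + 1) := by ring

theorem hasUpperType_logb_of_forall_Icc (hpos : ∀ t ≥ 1, 0 < f t) (hb : 1 < b) (hc : 1 ≤ c)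
    (hf : ∀ t ≥ (1:ℝ), ∀ l ∈ Icc 1 b, f (l * t) / f t ≤ c) :
    HasUpperType f (logb b c) := by
  refine ⟨c, by linarith, fun t ht l hl => ?_⟩
  have hl0 : 0 < l := by linarith
  set n := ⌊logb b l⌋₊
  have hbn : b ^ n ≤ l := by
    rw [← rpow_natCast, ← le_logb_iff_rpow_le hb hl0]
    exact Nat.floor_le (logb_nonneg hb hl)
  have hlbn : l ≤ b ^ (n + 1) := by
    rw [← rpow_natCast, ← logb_le_iff_le_rpow hb hl0, Nat.cast_succ]
    exact (Nat.lt_floor_add_one _).le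
  have hcn : c ^ n ≤ l ^ logb b c := by
    calc c ^ n = (b ^ n : ℝ) ^ logb b c := by
          rw [← rpow_natCast, ← rpow_natCast, ← rpow_mul (by linarith), mul_comm, rpow_mul
            (by linarith), rpow_logb (by linarith) hb.ne' (by linarith)]
      _ ≤ l ^ logb b c := rpow_le_rpow (by positivity) hbn (logb_nonneg hb hc)
  calc f (l * t) / f t ≤ c ^ (n + 1) :=
        div_le_pow_succ_of_forall_Icc hpos hb.le hc hf n t ht l ⟨hl, hlbn⟩
    _ = c * c ^ n := pow_succ' c n
    _ ≤ c * l ^ logb b c := by gcongr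

theorem RO.hasUpperType {α : ℝ → ℝ} (hα : RO α) : ∃ q, HasUpperType α q := by
  obtain ⟨-, hpos, b, hb, c, hc, hf⟩ := hα
  exact ⟨_, hasUpperType_logb_of_forall_Icc hpos hb hc fun t ht l hl => (hf t ht l hl).2⟩

theorem RO.hasLowerType {α : ℝ → ℝ} (hα : RO α) : ∃ p, HasLowerType α p := by
  obtain ⟨-, hpos, b, hb, c, hc, hf⟩ := hα
  refine ⟨_, HasUpperType.hasLowerType_of_inv hpos
    (hasUpperType_logb_of_forall_Icc (fun t ht => inv_pos.2 (hpos t ht)) hb hc fun t ht l hl => ?_)⟩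
  rw [inv_div_inv, ← inv_div]
  exact inv_le_of_inv_le₀ (by linarith) (hf t ht l hl).1

theorem RO.exists_hasLowerType_gt {α : ℝ → ℝ} (hα : RO α) {s : ℝ} (hs : s < sigma0 α) :
    ∃ p, s < p ∧ HasLowerType α p := by
  obtain ⟨p, hp, hsp⟩ := exists_lt_of_lt_csSup hα.hasLowerType hs
  exact ⟨p, hsp, hp⟩

theorem RO.exists_hasUpperType_lt {α : ℝ → ℝ} (hα : RO α) {s : ℝ} (hs : sigma1 α < s) :
    ∃ q, q < s ∧ HasUpperType α q := by
  obtain ⟨q, hq, hqs⟩ := exists_lt_of_csInf_lt hα.hasUpperType hs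
  exact ⟨q, hqs, hq⟩

end RO

section PsiInterp

variable {α : ℝ → ℝ} {s₀ s₁ t : ℝ}

theorem psiInterp_of_one_le (ht : 1 ≤ t) :
    psiInterp α s₀ s₁ t = t ^ (-s₀ / (s₁ - s₀)) * α (t ^ (1 / (s₁ - s₀))) :=
  if_pos ht

theorem psiInterp_of_lt_one (ht : t < 1) : psiInterp α s₀ s₁ t = α 1 :=
  if_neg (not_le.2 ht)

theorem psiInterp_one : psiInterp α s₀ s₁ 1 = α 1 := by
  simp [psiInterp_of_one_le]

theorem measurable_psiInterp (hα : Measurable α) : Measurable (psiInterp α s₀ s₁) :=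
  Measurable.ite measurableSet_Ici
    ((measurable_id.pow_const _).mul (hα.comp (measurable_id.pow_const _))) measurable_const

theorem psiInterp_pos (hpos : ∀ t ≥ 1, 0 < α t) (hs : s₀ ≤ s₁) (ht : 0 < t) :
    0 < psiInterp α s₀ s₁ t := by
  rcases lt_or_ge t 1 with ht1 | ht1
  · rw [psiInterp_of_lt_one ht1]
    exact hpos 1 le_rfl
  · rw [psiInterp_of_one_le ht1]
    exact mul_pos (rpow_pos_of_pos ht _)
      (hpos _ (one_le_rpow ht1 (one_div_nonneg.2 (sub_nonneg.2 hs))))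

theorem psiInterp_mul_div {l : ℝ} (hl : 1 ≤ l) (ht : 1 ≤ t) :
    psiInterp α s₀ s₁ (l * t) / psiInterp α s₀ s₁ t =
      l ^ (-s₀ / (s₁ - s₀)) * (α (l ^ (1 / (s₁ - s₀)) * t ^ (1 / (s₁ - s₀))) /
        α (t ^ (1 / (s₁ - s₀)))) := by
  have ht0 : 0 < t ^ (-s₀ / (s₁ - s₀)) := rpow_pos_of_pos (by linarith) _
  rw [psiInterp_of_one_le ht, psiInterp_of_one_le (one_le_mul_of_one_le_of_one_le hl ht),
    mul_rpow (by linarith) (by linarith), mul_rpow (by linarith) (by linarith),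
    mul_assoc, mul_div_assoc, mul_div_mul_left _ _ ht0.ne']

theorem HasLowerType.psiInterp {p : ℝ} (h : HasLowerType α p) (hs : s₀ ≤ s₁) :
    HasLowerType (psiInterp α s₀ s₁) ((p - s₀) / (s₁ - s₀)) := by
  obtain ⟨c, hc, hα⟩ := h
  refine ⟨c, hc, fun t ht l hl => ?_⟩
  have he : 0 ≤ 1 / (s₁ - s₀) := one_div_nonneg.2 (sub_nonneg.2 hs)
  have hl0 : 0 < l := by linarith
  rw [psiInterp_mul_div hl ht]
  calc c * l ^ ((p - s₀) / (s₁ - s₀))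
      = l ^ (-s₀ / (s₁ - s₀)) * (c * (l ^ (1 / (s₁ - s₀))) ^ p) := by
        rw [← rpow_mul hl0.le, mul_left_comm, ← rpow_add hl0]; ring_nf
    _ ≤ _ := by
        gcongr
        exact hα _ (one_le_rpow ht he) _ (one_le_rpow hl he)

theorem HasUpperType.psiInterp {q : ℝ} (h : HasUpperType α q) (hs : s₀ ≤ s₁) :
    HasUpperType (psiInterp α s₀ s₁) ((q - s₀) / (s₁ - s₀)) := by
  obtain ⟨c, hc, hα⟩ := h
  refine ⟨c, hc, fun t ht l hl => ?_⟩
  have he : 0 ≤ 1 / (s₁ - s₀) := one_div_nonneg.2 (sub_nonneg.2 hs)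
  have hl0 : 0 < l := by linarith
  rw [psiInterp_mul_div hl ht]
  calc _ ≤ l ^ (-s₀ / (s₁ - s₀)) * (c * (l ^ (1 / (s₁ - s₀))) ^ q) := by
        gcongr
        exact hα _ (one_le_rpow ht he) _ (one_le_rpow hl he)
    _ = c * l ^ ((q - s₀) / (s₁ - s₀)) := by
        rw [← rpow_mul hl0.le, mul_left_comm, ← rpow_add hl0]; ring_nf

end PsiInterp

theorem ClassB.of_hasLowerType_of_hasUpperType {f : ℝ → ℝ} {θ : ℝ} (hmeas : Measurable f)
    (hpos : ∀ t > 0, 0 < f t) (hconst : ∀ t < 1, f t = f 1) (hL : HasLowerType f 0)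
    (hU : HasUpperType f θ) (hθ : 0 ≤ θ) : ClassB f := by
  have hpos₁ : ∀ t ≥ 1, 0 < f t := fun t ht => hpos t (by linarith)
  obtain ⟨cL, hcL, hL⟩ := hL.mul_le hpos₁
  obtain ⟨cU, hcU, hU⟩ := hU.le_mul hpos₁
  refine ⟨hmeas, hpos, fun a b _ _ => ⟨max (f 1) (cU * max 1 b ^ θ * f 1), fun t ht => ?_⟩,
    fun r _ => ⟨max (f 1)⁻¹ (cL * f 1)⁻¹, fun t _ => ?_⟩⟩
  · rcases lt_or_ge t 1 with ht1 | ht1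
    · exact (hconst t ht1).le.trans (le_max_left _ _)
    refine le_max_of_le_right ((hU 1 le_rfl t ht1).trans ?_)
    rw [div_one]
    have := hpos₁ 1 le_rfl
    gcongr
    exact ht.2.trans (le_max_right 1 b)
  · rcases lt_or_ge t 1 with ht1 | ht1
    · exact hconst t ht1 ▸ le_max_left _ _
    exact le_max_of_le_right (inv_anti₀ (mul_pos hcL (hpos₁ 1 le_rfl)) (hL 1 le_rfl t ht1))

theorem ConcaveOn.ciInf {ι E : Type*} [Nonempty ι] [AddCommGroup E] [Module ℝ E] {s : Set E}
    {f : ι → E → ℝ} (hf : ∀ i, ConcaveOn ℝ s (f i))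
    (hbdd : ∀ x ∈ s, BddBelow (range fun i => f i x)) :
    ConcaveOn ℝ s fun x => ⨅ i, f i x := by
  refine ⟨(hf (Classical.arbitrary ι)).1, fun x hx y hy a b ha hb hab => le_ciInf fun i => ?_⟩
  calc a • (⨅ i, f i x) + b • (⨅ i, f i y) ≤ a • f i x + b • f i y := by
        gcongr
        exacts [ciInf_le (hbdd x hx) i, ciInf_le (hbdd y hy) i]
    _ ≤ f i (a • x + b • y) := (hf i).2 hx hy ha hb hab

noncomputable def lowerEnvelope (f : ℝ → ℝ) (θ t : ℝ) : ℝ :=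
  ⨅ r : Ici (1:ℝ), f r * ((t / r) ^ θ + 1)

section LowerEnvelope

variable {f : ℝ → ℝ} {θ : ℝ}

theorem bddBelow_lowerEnvelope (hf : ∀ r ≥ 1, 0 ≤ f r) {t : ℝ} (ht : 0 ≤ t) :
    BddBelow (range fun r : Ici (1:ℝ) => f r * ((t / r) ^ θ + 1)) :=
  ⟨0, by
    rintro _ ⟨r, rfl⟩
    have : (0:ℝ) ≤ r := zero_le_one.trans r.2
    exact mul_nonneg (hf r r.2) (by positivity)⟩

theorem concaveOn_lowerEnvelope (hf : ∀ r ≥ 1, 0 ≤ f r) (hθ₀ : 0 ≤ θ) (hθ₁ : θ ≤ 1) :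
    ConcaveOn ℝ (Ici 0) (lowerEnvelope f θ) := by
  refine ConcaveOn.ciInf (fun r => ?_) (fun t ht => bddBelow_lowerEnvelope hf ht)
  have hr : (0:ℝ) ≤ r := zero_le_one.trans r.2
  refine (((concaveOn_rpow hθ₀ hθ₁).smul (div_nonneg (hf r r.2) (rpow_nonneg hr θ))).add_const
    (f r)).congr fun t ht => ?_
  simp only [Pi.add_apply, smul_eq_mul, div_rpow (mem_Ici.1 ht) hr]
  ring

theorem lowerEnvelope_le (hf : ∀ r ≥ 1, 0 ≤ f r) {t : ℝ} (ht : 1 ≤ t) :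
    lowerEnvelope f θ t ≤ 2 * f t := by
  have := ciInf_le (bddBelow_lowerEnvelope (θ := θ) hf (by linarith)) ⟨t, ht⟩
  rwa [div_self (by linarith), one_rpow, one_add_one_eq_two, mul_comm] at this

theorem HasLowerType.exists_mul_le_lowerEnvelope (hL : HasLowerType f 0)
    (hU : HasUpperType f θ) (hpos : ∀ t ≥ 1, 0 < f t) :
    ∃ c > 0, ∀ t ≥ (1:ℝ), c * f t ≤ lowerEnvelope f θ t := by
  obtain ⟨cL, hcL, hL⟩ := hL.mul_le hpos
  obtain ⟨cU, hcU, hU⟩ := hU.le_mul hpos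
  refine ⟨min cL cU⁻¹, lt_min hcL (inv_pos.2 hcU), fun t ht => le_ciInf fun ⟨r, hr⟩ => ?_⟩
  have hr : (1:ℝ) ≤ r := hr
  have hft := hpos t ht
  have hfr := hpos r hr
  have hpow : 0 ≤ (t / r) ^ θ := rpow_nonneg (div_nonneg (by linarith) (by linarith)) θ
  rcases le_total t r with htr | hrt
  · calc min cL cU⁻¹ * f t ≤ cL * f t := by gcongr; exact min_le_left _ _
      _ ≤ f r := hL t ht r htr
      _ ≤ f r * ((t / r) ^ θ + 1) := by nlinarith
  · calc min cL cU⁻¹ * f t ≤ cU⁻¹ * f t := by gcongr; exact min_le_right _ _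
      _ ≤ (t / r) ^ θ * f r := by
        rw [inv_mul_le_iff₀ hcU, ← mul_assoc]; exact hU r hr t hrt
      _ ≤ f r * ((t / r) ^ θ + 1) := by nlinarith

end LowerEnvelope

def PseudoconcaveAtTop (ψ : ℝ → ℝ) : Prop :=
  ∃ b : ℝ, 1 ≤ b ∧ ∃ ψ₁ : ℝ → ℝ, ConcaveOn ℝ (Set.Ioi b) ψ₁ ∧
    (∀ t > b, 0 < ψ₁ t) ∧ ∃ M > (0:ℝ), ∀ t > b, ψ t ≤ M * ψ₁ t ∧ ψ₁ t ≤ M * ψ t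

theorem PseudoconcaveAtTop.of_hasLowerType_of_hasUpperType {f : ℝ → ℝ} {θ : ℝ}
    (hpos : ∀ t ≥ 1, 0 < f t) (hL : HasLowerType f 0) (hU : HasUpperType f θ)
    (hθ₀ : 0 ≤ θ) (hθ₁ : θ ≤ 1) : PseudoconcaveAtTop f := by
  have hf : ∀ r ≥ 1, 0 ≤ f r := fun r hr => (hpos r hr).le
  obtain ⟨c, hc, hcf⟩ := hL.exists_mul_le_lowerEnvelope hU hpos
  refine ⟨1, le_rfl, lowerEnvelope f θ,
    (concaveOn_lowerEnvelope hf hθ₀ hθ₁).subset (Ioi_subset_Ici zero_le_one) (convex_Ioi 1),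
    fun t ht => (mul_pos hc (hpos t ht.le)).trans_le (hcf t ht.le),
    c⁻¹ + 2, by positivity, fun t ht => ⟨?_, ?_⟩⟩
  · have hE := (mul_pos hc (hpos t ht.le)).trans_le (hcf t ht.le)
    calc f t ≤ c⁻¹ * lowerEnvelope f θ t := by
          rw [← div_eq_inv_mul, le_div_iff₀' hc]; exact hcf t ht.le
      _ ≤ (c⁻¹ + 2) * lowerEnvelope f θ t := mul_le_mul_of_nonneg_right (by linarith) hE.le
  · calc lowerEnvelope f θ t ≤ 2 * f t := lowerEnvelope_le hf ht.le
      _ ≤ (c⁻¹ + 2) * f t := mul_le_mul_of_nonneg_right (by linarith [inv_pos.2 hc]) (hf t ht.le)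

/-- for `α ∈ RO`, `s₀ < σ₀(α)`, `s₁ > σ₁(α)`, the function `ψ` of formula
(20) belongs to the class `𝓑` and is pseudoconcave in a neighborhood of `+∞`. -/
theorem psiInterp_mem_B_and_pseudoconcave (α : ℝ → ℝ) (hα : RO α) (s₀ s₁ : ℝ)
    (h0 : s₀ < sigma0 α) (h1 : sigma1 α < s₁) :
    ClassB (psiInterp α s₀ s₁) ∧
    ∃ b : ℝ, 1 ≤ b ∧ ∃ ψ₁ : ℝ → ℝ, ConcaveOn ℝ (Set.Ioi b) ψ₁ ∧
      (∀ t > b, 0 < ψ₁ t) ∧ ∃ M > (0:ℝ), ∀ t > b,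
        psiInterp α s₀ s₁ t ≤ M * ψ₁ t ∧ ψ₁ t ≤ M * psiInterp α s₀ s₁ t := by
  obtain ⟨p, hs₀p, hp⟩ := hα.exists_hasLowerType_gt h0
  obtain ⟨q, hqs₁, hq⟩ := hα.exists_hasUpperType_lt h1
  have hpq : p ≤ q := hp.le_of_hasUpperType hq
  have hs : s₀ < s₁ := by linarith
  have hpos : ∀ t > 0, 0 < psiInterp α s₀ s₁ t := fun t => psiInterp_pos hα.2.1 hs.le
  have hL : HasLowerType (psiInterp α s₀ s₁) 0 :=
    (hp.psiInterp hs.le).mono (div_nonneg (by linarith) (by linarith))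
  have hU := hq.psiInterp hs.le
  have hθ₀ : 0 ≤ (q - s₀) / (s₁ - s₀) := div_nonneg (by linarith) (by linarith)
  have hθ₁ : (q - s₀) / (s₁ - s₀) ≤ 1 := (div_le_one (by linarith)).2 (by linarith)
  refine ⟨ClassB.of_hasLowerType_of_hasUpperType (measurable_psiInterp hα.1) hpos
    (fun t ht => by rw [psiInterp_of_lt_one ht, psiInterp_one]) hL hU hθ₀,
    PseudoconcaveAtTop.of_hasLowerType_of_hasUpperType (fun t ht => hpos t (by linarith))
      hL hU hθ₀ hθ₁⟩
end

section
/- Let T : X₀ → Y₀ be a linear map whose restrictions T : X₀ → Y₀ and T : X₁ → Y₁ are bounded Fredholm operators with the same kernel N and the same index, where [X₀,X₁] and [Y₀,Y₁] are admissible couples of separable Hilbert spaces (continuous dense embeddings X₁ ↪ X₀, Y₁ ↪ Y₀). If ψ ∈ 𝓑 is an interpolation parameter, then T : X_ψ → Y_ψ is bounded and Fredholm with kernel N, the same index, and range equal to Y_ψ ∩ T(X₀). -/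
/-!
The range of `T₀` is closed of finite codimension, and `Y₁`, `Yψ` are dense in `Y₀`, so both map
onto the cokernel `Y₀ ⧸ T₀(X₀)`. For `Y₁` this map `Y₁ ⧸ T₁(X₁) → Y₀ ⧸ T₀(X₀)` is a surjection
between spaces of the same finite dimension (the kernels and the indices agree), hence injective:
`Y₁ ∩ T₀(X₀) = T₁(X₁)`. A complement `C` of `T₁(X₁)` in `Y₁` is then also a complement of
`T₀(X₀)` in `Y₀`, and the right inverse `R₀` of `T₀` on its range that vanishes on `C` maps `Y₁`
into `X₁`. Interpolating `R₀` gives `Rψ` with `Tψ Rψ y = y` whenever `y ∈ Yψ ∩ T₀(X₀)`, so the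
range of `Tψ` is `Yψ ∩ T₀(X₀)` and `Yψ ⧸ Tψ(Xψ) ≅ Y₀ ⧸ T₀(X₀)`.
-/

open Function Module Submodule

namespace Submodule

section Ring

variable {R M N : Type*} [Ring R] [AddCommGroup M] [Module R M] [AddCommGroup N] [Module R N]
  {f : M →ₗ[R] N} {p : Submodule R M} {q : Submodule R N}

theorem isCompl_map_of_comap_eq (hpq : q.comap f = p) (hf : Surjective (q.mkQ ∘ₗ f))
    {C : Submodule R M} (hC : IsCompl p C) : IsCompl q (C.map f) := by
  constructor
  · rw [disjoint_def]
    rintro _ hq ⟨c, hc, rfl⟩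
    have : c ∈ p := hpq ▸ hq
    simp [disjoint_def.1 hC.disjoint c this hc]
  · rw [codisjoint_iff, eq_top_iff]
    intro y _
    obtain ⟨x, hx⟩ := hf (q.mkQ y)
    obtain ⟨a, ha, c, hc, rfl⟩ := mem_sup.1 (hC.sup_eq_top ▸ mem_top (x := x))
    have hy : y - f (a + c) ∈ q := (Quotient.eq q).1 hx.symm
    have ha' : f a ∈ q := by rwa [← mem_comap, hpq]
    refine mem_sup.2 ⟨y - f (a + c) + f a, add_mem hy ha', f c, mem_map_of_mem hc, ?_⟩
    rw [map_add]; abel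

noncomputable def quotientEquivOfComapEq (hpq : q.comap f = p) (hf : Surjective (q.mkQ ∘ₗ f)) :
    (M ⧸ p) ≃ₗ[R] N ⧸ q :=
  (quotEquivOfEq _ _ (by rw [LinearMap.ker_comp, ker_mkQ, hpq])).trans
    (LinearMap.quotKerEquivOfSurjective _ hf)

end Ring

theorem comap_eq_of_surjective_mkQ_comp {K M N : Type*} [Field K] [AddCommGroup M] [Module K M]
    [AddCommGroup N] [Module K N] {f : M →ₗ[K] N} {p : Submodule K M} {q : Submodule K N}
    [FiniteDimensional K (M ⧸ p)] [FiniteDimensional K (N ⧸ q)] (hpq : p ≤ q.comap f)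
    (hf : Surjective (q.mkQ ∘ₗ f)) (hdim : finrank K (M ⧸ p) = finrank K (N ⧸ q)) :
    q.comap f = p := by
  have hsurj : Surjective (p.mapQ q f hpq) := by
    rw [← LinearMap.range_eq_top, range_mapQ, ← LinearMap.range_comp, LinearMap.range_eq_top]
    exact hf
  have hinj := (LinearMap.injective_iff_surjective_of_finrank_eq_finrank hdim).2 hsurj
  refine le_antisymm (fun x hx ↦ ?_) hpq
  rw [← Quotient.mk_eq_zero]
  exact hinj (by simpa using hx)

theorem surjective_mkQ_comp_of_denseRange {𝕜 Y Z : Type*} [NontriviallyNormedField 𝕜]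
    [CompleteSpace 𝕜] [AddCommGroup Y] [Module 𝕜 Y] [TopologicalSpace Y]
    [IsTopologicalAddGroup Y] [ContinuousSMul 𝕜 Y] [AddCommGroup Z] [Module 𝕜 Z]
    [TopologicalSpace Z] {f : Z →L[𝕜] Y} (hf : DenseRange f) {r : Submodule 𝕜 Y}
    (hr : IsClosed (r : Set Y)) [FiniteDimensional 𝕜 (Y ⧸ r)] :
    Surjective (r.mkQ ∘ₗ (f : Z →ₗ[𝕜] Y)) := by
  have : T2Space (Y ⧸ r) := by have := hr; infer_instance
  have hdense : DenseRange (r.mkQ ∘ₗ (f : Z →ₗ[𝕜] Y)) :=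
    r.mkQ_surjective.denseRange.comp hf r.continuous_mkQ
  rw [← LinearMap.range_eq_top,
    ← (LinearMap.range _).closed_of_finiteDimensional.submodule_topologicalClosure_eq,
    ← dense_iff_topologicalClosure_eq_top]
  exact hdense

end Submodule

theorem LinearMap.comap_range_eq_range_of_rightInvOn {R M N M₀ N₀ : Type*} [Ring R]
    [AddCommGroup M] [Module R M] [AddCommGroup N] [Module R N]
    [AddCommGroup M₀] [Module R M₀] [AddCommGroup N₀] [Module R N₀]
    {T₀ : M₀ →ₗ[R] N₀} {T : M →ₗ[R] N} {i : M →ₗ[R] M₀} {j : N →ₗ[R] N₀} (hj : Injective j)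
    (hT : ∀ x, T₀ (i x) = j (T x)) {S₀ : N₀ →ₗ[R] M₀} {S : N →ₗ[R] M}
    (hS : ∀ y, S₀ (j y) = i (S y)) (hS₀ : Set.RightInvOn S₀ T₀ T₀.range) :
    T₀.range.comap j = T.range := by
  refine le_antisymm (fun y hy ↦ ⟨S y, hj ?_⟩) ?_
  · rintro _ ⟨x, rfl⟩
    exact ⟨i x, hT x⟩
  · rw [← hT, ← hS, hS₀ hy]

namespace ContinuousLinearMap

section NontriviallyNormedField

variable {𝕜 E F : Type*} [NontriviallyNormedField 𝕜]
  [NormedAddCommGroup E] [NormedSpace 𝕜 E] [NormedAddCommGroup F] [NormedSpace 𝕜 F]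

theorem isClosed_range_of_finiteDimensional_quotient [CompleteSpace 𝕜] [CompleteSpace E]
    [CompleteSpace F] (T : E →L[𝕜] F)
    [FiniteDimensional 𝕜 (F ⧸ T.range)] : IsClosed (T.range : Set F) := by
  obtain ⟨M, hM⟩ := T.range.exists_isCompl
  have : FiniteDimensional 𝕜 M := (T.range.quotientEquivOfIsCompl M hM).finiteDimensional
  have : CompleteSpace M := FiniteDimensional.complete 𝕜 M
  let Φ : E × M →L[𝕜] F := T.coprod M.subtypeL
  have hΦ : Surjective Φ := by
    intro y
    obtain ⟨t, ⟨x, rfl⟩, m, hm, rfl⟩ := mem_sup.1 (hM.sup_eq_top ▸ mem_top (x := y))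
    exact ⟨(x, ⟨m, hm⟩), rfl⟩
  have hpre : Φ ⁻¹' T.range = {p | p.2 = 0} := by
    ext ⟨x, m⟩
    simp only [Set.mem_preimage, Set.mem_ofPred_eq, SetLike.mem_coe, Φ, coprod_apply,
      subtypeL_apply]
    refine (Submodule.add_mem_iff_right _ (T.mem_range_self x)).trans
      ⟨fun h ↦ ?_, fun h ↦ by simp [h]⟩
    exact Subtype.ext (disjoint_def.1 hM.disjoint _ h m.2)
  rw [← (Φ.isQuotientMap hΦ).isClosed_preimage, hpre]
  exact isClosed_eq continuous_snd continuous_const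

theorem exists_comp_eq_of_range_le {E₁ : Type*} [NormedAddCommGroup E₁] [NormedSpace 𝕜 E₁]
    [CompleteSpace E₁] [CompleteSpace F] {ι : E₁ →L[𝕜] E} (hι : Injective ι) {R : F →L[𝕜] E}
    (hR : R.range ≤ ι.range) : ∃ R₁ : F →L[𝕜] E₁, ι ∘L R₁ = R := by
  let R₁ : F →ₗ[𝕜] E₁ := (LinearEquiv.ofInjective (ι : E₁ →ₗ[𝕜] E) hι).symm ∘ₗ
    (R : F →ₗ[𝕜] E).codRestrict _ (fun y ↦ hR (LinearMap.mem_range_self _ y))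
  have hR₁ : ∀ y, ι (R₁ y) = R y := fun y ↦ by
    simp only [R₁, LinearMap.comp_apply, LinearEquiv.coe_coe]
    exact LinearEquiv.ofInjective_symm_apply ..
  refine ⟨⟨R₁, R₁.continuous_of_seq_closed_graph fun u x y hu hRu ↦ hι ?_⟩, ext hR₁⟩
  rw [hR₁]
  refine tendsto_nhds_unique ((ι.continuous.tendsto y).comp hRu) ?_
  simpa [Function.comp_def, hR₁] using (R.continuous.tendsto x).comp hu

theorem IsFredholm.exists_rightInvOn_range_of_isTopCompl {T : E →L[𝕜] F} (hT : T.IsFredholm)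
    {W : Submodule 𝕜 F} (hW : IsTopCompl T.range W) :
    ∃ R : F →L[𝕜] E, Set.RightInvOn R T T.range ∧ ∀ w ∈ W, R w = 0 := by
  obtain ⟨D, hD⟩ := hT.closedComplemented_ker.exists_isTopCompl
  let P := hT.fredholmPackage hD hW
  refine ⟨P.quasiInverse, fun y hy ↦ ?_, fun w hw ↦ ?_⟩
  · rw [congr($(P.eq_equiv) (P.quasiInverse y))]
    change ((P.equiv (P.decDom.proj (P.equiv.symm (P.decCodom.proj y) : E))) : F) = y
    rw [projectionOntoL_apply_left, P.equiv.apply_symm_apply]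
    exact congr(Subtype.val $(projectionOntoL_apply_left hW ⟨y, hy⟩))
  · change ((P.equiv.symm (P.decCodom.proj w)) : E) = 0
    rw [show P.decCodom.proj w = 0 from (projectionOntoL_apply_eq_zero_iff hW).2 hw, map_zero,
      ZeroMemClass.coe_zero]

end NontriviallyNormedField

section RCLike

variable {𝕜 E₀ E₁ F₀ F₁ : Type*} [RCLike 𝕜]
  [NormedAddCommGroup E₀] [NormedSpace 𝕜 E₀] [CompleteSpace E₀]
  [NormedAddCommGroup E₁] [NormedSpace 𝕜 E₁] [CompleteSpace E₁]
  [NormedAddCommGroup F₀] [NormedSpace 𝕜 F₀] [CompleteSpace F₀]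
  [NormedAddCommGroup F₁] [NormedSpace 𝕜 F₁] [CompleteSpace F₁]

theorem isFredholm_of_finiteDimensional_ker_coker (T : E₀ →L[𝕜] F₀) [FiniteDimensional 𝕜 T.ker]
    [FiniteDimensional 𝕜 (F₀ ⧸ T.range)] : T.IsFredholm := by
  have hclosed := T.isClosed_range_of_finiteDimensional_quotient
  have : CompleteSpace T.range := hclosed.completeSpace_coe
  refine ⟨?_, hclosed, inferInstance, inferInstance, .of_finiteDimensional _⟩
  have hsurj : Surjective T.rangeRestrict := LinearMap.surjective_rangeRestrict _
  exact (T : E₀ →ₗ[𝕜] F₀).isStrictMap_iff_isOpenQuotientMap_rangeRestrict.2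
    ⟨hsurj, T.rangeRestrict.continuous, T.rangeRestrict.isOpenMap hsurj⟩

variable {ιE : E₁ →L[𝕜] E₀} {ιF : F₁ →L[𝕜] F₀} {T₀ : E₀ →L[𝕜] F₀} {T₁ : E₁ →L[𝕜] F₁}

theorem exists_intertwining_rightInvOn_range (hιE : Injective ιE) (hιF : DenseRange ιF)
    (hT : ∀ x, T₀ (ιE x) = ιF (T₁ x)) (hker : T₀.ker ≤ ιE.range) [FiniteDimensional 𝕜 T₀.ker]
    [FiniteDimensional 𝕜 (F₀ ⧸ T₀.range)] [FiniteDimensional 𝕜 (F₁ ⧸ T₁.range)]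
    (hcodim : finrank 𝕜 (F₁ ⧸ T₁.range) = finrank 𝕜 (F₀ ⧸ T₀.range)) :
    ∃ (R₀ : F₀ →L[𝕜] E₀) (R₁ : F₁ →L[𝕜] E₁),
      (∀ y, R₀ (ιF y) = ιE (R₁ y)) ∧ Set.RightInvOn R₀ T₀ T₀.range := by
  have hsurj := surjective_mkQ_comp_of_denseRange hιF
    T₀.isClosed_range_of_finiteDimensional_quotient
  have hcomap : T₀.range.comap (ιF : F₁ →ₗ[𝕜] F₀) = T₁.range :=
    comap_eq_of_surjective_mkQ_comp (by rintro _ ⟨x, rfl⟩; exact ⟨ιE x, hT x⟩) hsurj hcodim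
  obtain ⟨C, hC⟩ := T₁.range.exists_isCompl
  have hW : IsTopCompl T₀.range (C.map (ιF : F₁ →ₗ[𝕜] F₀)) :=
    (isCompl_map_of_comap_eq hcomap hsurj hC).isTopCompl_of_finiteDimensional_quotient
      T₀.isClosed_range_of_finiteDimensional_quotient
  obtain ⟨R₀, hR₀, hR₀W⟩ :=
    (isFredholm_of_finiteDimensional_ker_coker T₀).exists_rightInvOn_range_of_isTopCompl hW
  have hR₀ιF : (R₀ ∘L ιF).range ≤ ιE.range := by
    rintro _ ⟨y, rfl⟩
    obtain ⟨_, ⟨x, rfl⟩, c, hc, rfl⟩ := mem_sup.1 (hC.sup_eq_top ▸ mem_top (x := y))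
    have hdiff : R₀ (ιF (T₁ x + c)) - ιE x ∈ T₀.ker := by
      rw [LinearMap.mem_ker, coe_coe, map_sub, sub_eq_zero, map_add, ← hT, map_add,
        hR₀W (ιF c) (mem_map_of_mem hc), add_zero]
      exact hR₀ (T₀.mem_range_self _)
    obtain ⟨x', hx'⟩ := hker hdiff
    rw [coe_coe] at hx'
    exact ⟨x + x', by simp [hx']⟩
  obtain ⟨R₁, hR₁⟩ := exists_comp_eq_of_range_le hιE hR₀ιF
  exact ⟨R₀, R₁, fun y ↦ congr($hR₁ y).symm, hR₀⟩

end RCLike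

end ContinuousLinearMap

open ContinuousLinearMap LinearMap

theorem interpolation_of_fredholm_operators_general
    {X₀ X₁ Xψ Y₀ Y₁ Yψ : Type*}
    [NormedAddCommGroup X₀] [InnerProductSpace ℂ X₀] [CompleteSpace X₀]
    [NormedAddCommGroup X₁] [InnerProductSpace ℂ X₁] [CompleteSpace X₁]
    [NormedAddCommGroup Xψ] [InnerProductSpace ℂ Xψ]
    [NormedAddCommGroup Y₀] [InnerProductSpace ℂ Y₀] [CompleteSpace Y₀]
    [NormedAddCommGroup Y₁] [InnerProductSpace ℂ Y₁] [CompleteSpace Y₁]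
    [NormedAddCommGroup Yψ] [InnerProductSpace ℂ Yψ]
    -- the admissible couple `[X₀, X₁]` with intermediate space `Xψ`:
    (ιX : X₁ →L[ℂ] X₀) (hιX : Function.Injective ιX)
    (κX : Xψ →L[ℂ] X₀) (hκX : Function.Injective κX)
    (jX : X₁ →L[ℂ] Xψ) (hjX : ∀ x, κX (jX x) = ιX x)
    -- the admissible couple `[Y₀, Y₁]` with intermediate space `Yψ`:
    (ιY : Y₁ →L[ℂ] Y₀) (hdιY : DenseRange ιY)
    (κY : Yψ →L[ℂ] Y₀) (hκY : Function.Injective κY) (hdκY : DenseRange κY)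
    -- `ψ` is an interpolation parameter: every operator bounded on both couples
    -- restricts to a bounded operator between the intermediate spaces:
    (hXY : ∀ (S₀ : X₀ →L[ℂ] Y₀) (S₁ : X₁ →L[ℂ] Y₁), (∀ x, S₀ (ιX x) = ιY (S₁ x)) →
      ∃ Sψ : Xψ →L[ℂ] Yψ, ∀ x, S₀ (κX x) = κY (Sψ x))
    (hYX : ∀ (S₀ : Y₀ →L[ℂ] X₀) (S₁ : Y₁ →L[ℂ] X₁), (∀ y, S₀ (ιY y) = ιX (S₁ y)) →
      ∃ Sψ : Yψ →L[ℂ] Xψ, ∀ y, S₀ (κY y) = κX (Sψ y))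
    -- the operator `T`, its restrictions, and the Fredholm hypotheses:
    (T₀ : X₀ →L[ℂ] Y₀) (T₁ : X₁ →L[ℂ] Y₁) (hT : ∀ x, T₀ (ιX x) = ιY (T₁ x))
    (hker₀ : FiniteDimensional ℂ (LinearMap.ker (T₀ : X₀ →ₗ[ℂ] Y₀)))
    (hcoker₀ : FiniteDimensional ℂ (Y₀ ⧸ LinearMap.range (T₀ : X₀ →ₗ[ℂ] Y₀)))
    (hker₁ : FiniteDimensional ℂ (LinearMap.ker (T₁ : X₁ →ₗ[ℂ] Y₁)))
    (hcoker₁ : FiniteDimensional ℂ (Y₁ ⧸ LinearMap.range (T₁ : X₁ →ₗ[ℂ] Y₁)))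
    -- the kernels coincide (the kernel of `T₀` lies in `X₁`):
    (hsamek : ∀ x₀ : X₀, T₀ x₀ = 0 → ∃ x₁ : X₁, ιX x₁ = x₀ ∧ T₁ x₁ = 0)
    -- the indices coincide:
    (hind : (Module.finrank ℂ (LinearMap.ker (T₀ : X₀ →ₗ[ℂ] Y₀)) : ℤ) -
        Module.finrank ℂ (Y₀ ⧸ LinearMap.range (T₀ : X₀ →ₗ[ℂ] Y₀)) =
      (Module.finrank ℂ (LinearMap.ker (T₁ : X₁ →ₗ[ℂ] Y₁)) : ℤ) -
        Module.finrank ℂ (Y₁ ⧸ LinearMap.range (T₁ : X₁ →ₗ[ℂ] Y₁))) :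
    ∃ Tψ : Xψ →L[ℂ] Yψ,
      (∀ x : Xψ, T₀ (κX x) = κY (Tψ x)) ∧
      FiniteDimensional ℂ (LinearMap.ker (Tψ : Xψ →ₗ[ℂ] Yψ)) ∧
      FiniteDimensional ℂ (Yψ ⧸ LinearMap.range (Tψ : Xψ →ₗ[ℂ] Yψ)) ∧
      (∀ x : Xψ, Tψ x = 0 ↔ ∃ x₁ : X₁, jX x₁ = x ∧ T₁ x₁ = 0) ∧
      ((Module.finrank ℂ (LinearMap.ker (Tψ : Xψ →ₗ[ℂ] Yψ)) : ℤ) -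
          Module.finrank ℂ (Yψ ⧸ LinearMap.range (Tψ : Xψ →ₗ[ℂ] Yψ)) =
        (Module.finrank ℂ (LinearMap.ker (T₀ : X₀ →ₗ[ℂ] Y₀)) : ℤ) -
          Module.finrank ℂ (Y₀ ⧸ LinearMap.range (T₀ : X₀ →ₗ[ℂ] Y₀))) ∧
      (∀ y : Yψ, (∃ x : Xψ, Tψ x = y) ↔ ∃ x₀ : X₀, T₀ x₀ = κY y) := by
  have hkerT₀ : T₁.ker.map (ιX : X₁ →ₗ[ℂ] X₀) = T₀.ker := by
    refine le_antisymm (map_le_iff_le_comap.2 fun x₁ hx₁ ↦ ?_) fun x₀ hx₀ ↦ ?_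
    · simp [hT, show T₁ x₁ = 0 from hx₁]
    · obtain ⟨x₁, rfl, hx₁⟩ := hsamek x₀ hx₀
      exact mem_map_of_mem hx₁
  have hfinrank_ker : finrank ℂ T₁.ker = finrank ℂ T₀.ker :=
    hkerT₀ ▸ (equivMapOfInjective _ hιX _).finrank_eq
  obtain ⟨R₀, R₁, hR, hR₀⟩ := exists_intertwining_rightInvOn_range hιX hdιY hT
    (hkerT₀ ▸ map_le_range) (by omega)
  obtain ⟨Tψ, hTψ⟩ := hXY T₀ T₁ hT
  obtain ⟨Rψ, hRψ⟩ := hYX R₀ R₁ hR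
  have hrange : T₀.range.comap (κY : Yψ →ₗ[ℂ] Y₀) = Tψ.range :=
    comap_range_eq_range_of_rightInvOn hκY hTψ hRψ hR₀
  have hkerψ : ∀ x, Tψ x = 0 ↔ ∃ x₁, jX x₁ = x ∧ T₁ x₁ = 0 := by
    refine fun x ↦ ⟨fun hx ↦ ?_, ?_⟩
    · obtain ⟨x₁, hx₁, hT₁⟩ := hsamek _ (by rw [hTψ, hx, map_zero])
      exact ⟨x₁, hκX (by rw [hjX, hx₁]), hT₁⟩
    · rintro ⟨x₁, rfl, hx₁⟩
      exact hκY (by rw [← hTψ, hjX, hT, hx₁, map_zero, map_zero])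
  have hkerψ_eq : Tψ.ker = T₁.ker.map (jX : X₁ →ₗ[ℂ] Xψ) := by
    ext x
    simpa [and_comm] using hkerψ x
  have hjX_inj : Injective jX := fun a b h ↦ hιX (by rw [← hjX, ← hjX, h])
  let e := quotientEquivOfComapEq hrange
    (surjective_mkQ_comp_of_denseRange hdκY T₀.isClosed_range_of_finiteDimensional_quotient)
  have : FiniteDimensional ℂ Tψ.ker := hkerψ_eq ▸ inferInstance
  refine ⟨Tψ, hTψ, this, e.symm.finiteDimensional, hkerψ, ?_, fun y ↦ ?_⟩
  · rw [e.finrank_eq, hkerψ_eq, ← (equivMapOfInjective _ hjX_inj _).finrank_eq, hfinrank_ker]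
  · simpa [eq_comm] using (SetLike.ext_iff.1 hrange y).symm

/-- interpolation of Fredholm operators: let `[X₀,X₁]`, `[Y₀,Y₁]` be
admissible couples of separable Hilbert spaces, with interpolation spaces `Xψ`, `Yψ`
(for an interpolation parameter `ψ ∈ 𝓑`, expressed abstractly through the interpolation
property for operators between the couples). If `T` restricts to bounded Fredholm
operators `T : X₀ → Y₀` and `T : X₁ → Y₁` with the same kernel `N ⊆ X₁` and the same
index, then `T : Xψ → Yψ` is a bounded Fredholm operator with kernel `N`, the same
index, and range `Yψ ∩ T(X₀)`. -/
theorem interpolation_of_fredholm_operators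
    {X₀ X₁ Xψ Y₀ Y₁ Yψ : Type*}
    [NormedAddCommGroup X₀] [InnerProductSpace ℂ X₀] [CompleteSpace X₀]
    [TopologicalSpace.SeparableSpace X₀]
    [NormedAddCommGroup X₁] [InnerProductSpace ℂ X₁] [CompleteSpace X₁]
    [TopologicalSpace.SeparableSpace X₁]
    [NormedAddCommGroup Xψ] [InnerProductSpace ℂ Xψ] [CompleteSpace Xψ]
    [TopologicalSpace.SeparableSpace Xψ]
    [NormedAddCommGroup Y₀] [InnerProductSpace ℂ Y₀] [CompleteSpace Y₀]
    [TopologicalSpace.SeparableSpace Y₀]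
    [NormedAddCommGroup Y₁] [InnerProductSpace ℂ Y₁] [CompleteSpace Y₁]
    [TopologicalSpace.SeparableSpace Y₁]
    [NormedAddCommGroup Yψ] [InnerProductSpace ℂ Yψ] [CompleteSpace Yψ]
    [TopologicalSpace.SeparableSpace Yψ]
    -- the admissible couple `[X₀, X₁]` with intermediate space `Xψ`:
    (ιX : X₁ →L[ℂ] X₀) (hιX : Function.Injective ιX) (hdιX : DenseRange ιX)
    (κX : Xψ →L[ℂ] X₀) (hκX : Function.Injective κX) (hdκX : DenseRange κX)
    (jX : X₁ →L[ℂ] Xψ) (hjX : ∀ x, κX (jX x) = ιX x) (hdjX : DenseRange jX)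
    -- the admissible couple `[Y₀, Y₁]` with intermediate space `Yψ`:
    (ιY : Y₁ →L[ℂ] Y₀) (hιY : Function.Injective ιY) (hdιY : DenseRange ιY)
    (κY : Yψ →L[ℂ] Y₀) (hκY : Function.Injective κY) (hdκY : DenseRange κY)
    (jY : Y₁ →L[ℂ] Yψ) (hjY : ∀ y, κY (jY y) = ιY y) (hdjY : DenseRange jY)
    -- `ψ` is an interpolation parameter: every operator bounded on both couples
    -- restricts to a bounded operator between the intermediate spaces:
    (hXY : ∀ (S₀ : X₀ →L[ℂ] Y₀) (S₁ : X₁ →L[ℂ] Y₁), (∀ x, S₀ (ιX x) = ιY (S₁ x)) →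
      ∃ Sψ : Xψ →L[ℂ] Yψ, ∀ x, S₀ (κX x) = κY (Sψ x))
    (hYX : ∀ (S₀ : Y₀ →L[ℂ] X₀) (S₁ : Y₁ →L[ℂ] X₁), (∀ y, S₀ (ιY y) = ιX (S₁ y)) →
      ∃ Sψ : Yψ →L[ℂ] Xψ, ∀ y, S₀ (κY y) = κX (Sψ y))
    (hXX : ∀ (S₀ : X₀ →L[ℂ] X₀) (S₁ : X₁ →L[ℂ] X₁), (∀ x, S₀ (ιX x) = ιX (S₁ x)) →
      ∃ Sψ : Xψ →L[ℂ] Xψ, ∀ x, S₀ (κX x) = κX (Sψ x))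
    (hYY : ∀ (S₀ : Y₀ →L[ℂ] Y₀) (S₁ : Y₁ →L[ℂ] Y₁), (∀ y, S₀ (ιY y) = ιY (S₁ y)) →
      ∃ Sψ : Yψ →L[ℂ] Yψ, ∀ y, S₀ (κY y) = κY (Sψ y))
    -- the operator `T`, its restrictions, and the Fredholm hypotheses:
    (T₀ : X₀ →L[ℂ] Y₀) (T₁ : X₁ →L[ℂ] Y₁) (hT : ∀ x, T₀ (ιX x) = ιY (T₁ x))
    (hker₀ : FiniteDimensional ℂ (LinearMap.ker (T₀ : X₀ →ₗ[ℂ] Y₀)))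
    (hcoker₀ : FiniteDimensional ℂ (Y₀ ⧸ LinearMap.range (T₀ : X₀ →ₗ[ℂ] Y₀)))
    (hker₁ : FiniteDimensional ℂ (LinearMap.ker (T₁ : X₁ →ₗ[ℂ] Y₁)))
    (hcoker₁ : FiniteDimensional ℂ (Y₁ ⧸ LinearMap.range (T₁ : X₁ →ₗ[ℂ] Y₁)))
    -- the kernels coincide (the kernel of `T₀` lies in `X₁`):
    (hsamek : ∀ x₀ : X₀, T₀ x₀ = 0 → ∃ x₁ : X₁, ιX x₁ = x₀ ∧ T₁ x₁ = 0)
    -- the indices coincide: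
    (hind : (Module.finrank ℂ (LinearMap.ker (T₀ : X₀ →ₗ[ℂ] Y₀)) : ℤ) -
        Module.finrank ℂ (Y₀ ⧸ LinearMap.range (T₀ : X₀ →ₗ[ℂ] Y₀)) =
      (Module.finrank ℂ (LinearMap.ker (T₁ : X₁ →ₗ[ℂ] Y₁)) : ℤ) -
        Module.finrank ℂ (Y₁ ⧸ LinearMap.range (T₁ : X₁ →ₗ[ℂ] Y₁))) :
    ∃ Tψ : Xψ →L[ℂ] Yψ,
      (∀ x : Xψ, T₀ (κX x) = κY (Tψ x)) ∧
      FiniteDimensional ℂ (LinearMap.ker (Tψ : Xψ →ₗ[ℂ] Yψ)) ∧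
      FiniteDimensional ℂ (Yψ ⧸ LinearMap.range (Tψ : Xψ →ₗ[ℂ] Yψ)) ∧
      (∀ x : Xψ, Tψ x = 0 ↔ ∃ x₁ : X₁, jX x₁ = x ∧ T₁ x₁ = 0) ∧
      ((Module.finrank ℂ (LinearMap.ker (Tψ : Xψ →ₗ[ℂ] Yψ)) : ℤ) -
          Module.finrank ℂ (Yψ ⧸ LinearMap.range (Tψ : Xψ →ₗ[ℂ] Yψ)) =
        (Module.finrank ℂ (LinearMap.ker (T₀ : X₀ →ₗ[ℂ] Y₀)) : ℤ) -
          Module.finrank ℂ (Y₀ ⧸ LinearMap.range (T₀ : X₀ →ₗ[ℂ] Y₀))) ∧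
      (∀ y : Yψ, (∃ x : Xψ, Tψ x = y) ↔ ∃ x₀ : X₀, T₀ x₀ = κY y) :=
  interpolation_of_fredholm_operators_general ιX hιX κX hκX jX hjX ιY hdιY κY hκY hdκY hXY hYX T₀ T₁
    hT hker₀ hcoker₀ hker₁ hcoker₁ hsamek hind
end
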